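/- arXiv:2103.04414 — 9 statements merged into one kernel-verified Lean document; each statement's English description precedes it below -/
import Mathlib

section
/- Let G be a finitely generated abelian group, ψ : G → G a monomorphism, and G*_ψ the ascending HNN-extension with stable letter t. Let A be a finite alphabet and x ∈ A^(G*_ψ) a configuration. Suppose H ≤ G is a subgroup with ψ(H) ≤ H, and ℓ ≥ 0 is such that σ_{ψ^ℓ(h)}(x) = x for all h ∈ H (where σ is the left shift action, σ_g(x)_h = x_{g⁻¹h}). Then for all i, j ≥ 0, g ∈ G, and h ∈ H, one has x_{t^(−j) g t^(i+j+ℓ) h} = x_{t^(−j) g t^(i+j+ℓ)}; i.e., every G-section of level at least ℓ is H-periodic. -/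
/-- Let `G` be a finitely generated abelian group, `ψ : G → G` a monomorphism, and `G*_ψ` the
ascending HNN-extension (realized as `HNNExtension G ⊤ ψ.range φ` with stable letter `t`).
Let `A` be a finite alphabet and `x : A^(G*_ψ)` a configuration. If `H ≤ G` satisfies
`ψ(H) ≤ H` and `ℓ ≥ 0` is such that `σ_{ψ^ℓ(h)}(x) = x` for all `h ∈ H` (where
`σ_g(x)_w = x_{g⁻¹ w}`), then every `G`-section of level at least `ℓ` is `H`-periodic:
`x_{t^(−j) g t^(i+j+ℓ) h} = x_{t^(−j) g t^(i+j+ℓ)}` for all `i, j ≥ 0`, `g ∈ G`, `h ∈ H`. -/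
theorem stmt3 {G : Type*} [CommGroup G] [Group.FG G] {A : Type*} [Finite A]
    (ψ : G →* G) (hψ : Function.Injective ψ)
    (φ : (⊤ : Subgroup G) ≃* ψ.range)
    (hφ : ∀ g : G, ((φ ⟨g, Subgroup.mem_top g⟩ : ψ.range) : G) = ψ g)
    (x : HNNExtension G ⊤ ψ.range φ → A)
    (H : Subgroup G) (hH : H.map ψ ≤ H) (ℓ : ℕ)
    (hx : ∀ h ∈ H, ∀ w : HNNExtension G ⊤ ψ.range φ,
      x ((HNNExtension.of (ψ^[ℓ] h))⁻¹ * w) = x w)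
    (i j : ℕ) (g : G) (h : G) (hh : h ∈ H) :
    x (HNNExtension.t ^ (-(j : ℤ)) * HNNExtension.of g * HNNExtension.t ^ (i + j + ℓ)
        * HNNExtension.of h) =
      x (HNNExtension.t ^ (-(j : ℤ)) * HNNExtension.of g * HNNExtension.t ^ (i + j + ℓ)) := by
  set T : HNNExtension G ⊤ ψ.range φ := HNNExtension.t with hT
  have key : ∀ a : G, T * HNNExtension.of a = HNNExtension.of (ψ a) * T := by
    intro a
    have := HNNExtension.t_mul_of (φ := φ) (⟨a, Subgroup.mem_top a⟩ : (⊤ : Subgroup G))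
    rwa [hφ] at this
  have keyn : ∀ (n : ℕ) (a : G),
      T ^ n * HNNExtension.of a = HNNExtension.of (ψ^[n] a) * T ^ n := by
    intro n
    induction n with
    | zero => simp
    | succ n ih =>
      intro a
      rw [pow_succ, mul_assoc, key a, ← mul_assoc, ih, Function.iterate_succ_apply,
        mul_assoc, ← pow_succ]
  have memH : ∀ n : ℕ, ψ^[n] h ∈ H := by
    intro n
    induction n with
    | zero => simpa using hh
    | succ n ih =>
      rw [Function.iterate_succ_apply']
      exact hH ⟨_, ih, rfl⟩
  have hz : T ^ (-(j : ℤ)) = (T ^ j)⁻¹ := by rw [zpow_neg, zpow_natCast]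
  have hm : i + j + ℓ = j + (i + ℓ) := by omega
  rw [hm]
  set m := j + (i + ℓ) with hmdef
  have e2 : (T ^ j)⁻¹ * HNNExtension.of (ψ^[m] h)
      = HNNExtension.of (ψ^[i + ℓ] h) * (T ^ j)⁻¹ := by
    have h2 := keyn j (ψ^[i + ℓ] h)
    rw [← Function.iterate_add_apply] at h2
    rw [← hmdef] at h2
    have := congrArg (fun z => (T ^ j)⁻¹ * z * (T ^ j)⁻¹) h2
    simpa [mul_assoc] using this.symm
  have hil : ψ^[i + ℓ] h = ψ^[ℓ] (ψ^[i] h) := by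
    rw [← Function.iterate_add_apply, add_comm]
  have calc1 : T ^ (-(j : ℤ)) * HNNExtension.of g * T ^ m * HNNExtension.of h
      = HNNExtension.of (ψ^[ℓ] (ψ^[i] h))
        * (T ^ (-(j : ℤ)) * HNNExtension.of g * T ^ m) := by
    rw [hz, mul_assoc, keyn m h, ← mul_assoc, mul_assoc ((T^j)⁻¹),
      ← MonoidHom.map_mul, mul_comm g, MonoidHom.map_mul, ← mul_assoc, e2, hil]
    group
  have main := hx (ψ^[i] h) (memH i)
    (T ^ (-(j : ℤ)) * HNNExtension.of g * T ^ m * HNNExtension.of h)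
  rw [calc1, inv_mul_cancel_left] at main
  rw [main, calc1]
end

section
/- Under the same hypotheses as the previous statement with H = G (i.e., σ_{ψ^ℓ(g)}(x) = x for all g ∈ G), the configuration x assigns the same symbol to all G-sections of the same level that share a common G-section of level ≥ ℓ below them: for all i, j, h ≥ 0 and g, g̃ ∈ G, x_{t^(−j) g t^(i+j+ℓ+h)} = x_{t^(−j) g t^(i+j+ℓ) g̃ t^h}. -/
/-- Under the hypotheses of the previous statement with `H = G` (i.e. `σ_{ψ^ℓ(g)}(x) = x` for
all `g ∈ G`), the configuration `x` assigns the same symbol to all `G`-sections of the same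
level sharing a common `G`-section of level `≥ ℓ` below them:
`x_{t^(−j) g t^(i+j+ℓ+h)} = x_{t^(−j) g t^(i+j+ℓ) g̃ t^h}` for all `i, j, h ≥ 0`, `g, g̃ ∈ G`. -/
theorem stmt4 {G : Type*} [CommGroup G] [Group.FG G] {A : Type*} [Finite A]
    (ψ : G →* G) (hψ : Function.Injective ψ)
    (φ : (⊤ : Subgroup G) ≃* ψ.range)
    (hφ : ∀ g : G, ((φ ⟨g, Subgroup.mem_top g⟩ : ψ.range) : G) = ψ g)
    (x : HNNExtension G ⊤ ψ.range φ → A) (ℓ : ℕ)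
    (hx : ∀ g : G, ∀ w : HNNExtension G ⊤ ψ.range φ,
      x ((HNNExtension.of (ψ^[ℓ] g))⁻¹ * w) = x w)
    (i j h : ℕ) (g g' : G) :
    x (HNNExtension.t ^ (-(j : ℤ)) * HNNExtension.of g * HNNExtension.t ^ (i + j + ℓ + h)) =
      x (HNNExtension.t ^ (-(j : ℤ)) * HNNExtension.of g * HNNExtension.t ^ (i + j + ℓ)
        * HNNExtension.of g' * HNNExtension.t ^ h) := by
  have key1 : ∀ a : G, HNNExtension.t * HNNExtension.of a =
      (HNNExtension.of (ψ a) : HNNExtension G ⊤ ψ.range φ) * HNNExtension.t := by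
    intro a
    have := HNNExtension.t_mul_of (φ := φ) (⟨a, Subgroup.mem_top a⟩ : (⊤ : Subgroup G))
    rwa [hφ] at this
  have key : ∀ (n : ℕ) (a : G),
      (HNNExtension.t : HNNExtension G ⊤ ψ.range φ) ^ n * HNNExtension.of a =
      HNNExtension.of (ψ^[n] a) * HNNExtension.t ^ n := by
    intro n
    induction n with
    | zero => simp
    | succ n ih =>
      intro a
      rw [pow_succ', mul_assoc, ih, ← mul_assoc, key1, Function.iterate_succ_apply', mul_assoc]
  have hz : (HNNExtension.t : HNNExtension G ⊤ ψ.range φ) ^ (-(j : ℤ)) =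
      (HNNExtension.t ^ j)⁻¹ := by
    rw [zpow_neg, zpow_natCast]
  have e1 : (HNNExtension.t : HNNExtension G ⊤ ψ.range φ) ^ (-(j : ℤ)) * HNNExtension.of g * HNNExtension.t ^ (i + j + ℓ)
        * HNNExtension.of g' * HNNExtension.t ^ h
      = (HNNExtension.t ^ j)⁻¹ *
        (HNNExtension.of (g * ψ^[i + j + ℓ] g') * HNNExtension.t ^ (i + j + ℓ + h)) := by
    rw [hz, mul_assoc, mul_assoc, mul_assoc, ← mul_assoc (HNNExtension.t ^ (i + j + ℓ)),
      key, map_mul, pow_add]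
    simp [mul_assoc, ← pow_add]
  have hiter : ψ^[j] (ψ^[ℓ] (ψ^[i] g')) = ψ^[i + j + ℓ] g' := by
    rw [← Function.iterate_add_apply, ← Function.iterate_add_apply]
    congr 1
    omega
  have e2 : (HNNExtension.of (ψ^[ℓ] (ψ^[i] g')) : HNNExtension G ⊤ ψ.range φ)⁻¹ *
        ((HNNExtension.t ^ j)⁻¹ *
          (HNNExtension.of (g * ψ^[i + j + ℓ] g') * HNNExtension.t ^ (i + j + ℓ + h)))
      = (HNNExtension.t : HNNExtension G ⊤ ψ.range φ) ^ (-(j : ℤ)) * HNNExtension.of g * HNNExtension.t ^ (i + j + ℓ + h) := by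
    have h1 : (HNNExtension.of (ψ^[ℓ] (ψ^[i] g')) : HNNExtension G ⊤ ψ.range φ)⁻¹ *
        (HNNExtension.t ^ j)⁻¹
        = (HNNExtension.t ^ j)⁻¹ * (HNNExtension.of (ψ^[i + j + ℓ] g'))⁻¹ := by
      rw [← mul_inv_rev, key, hiter, mul_inv_rev]
    rw [hz, ← mul_assoc, h1, mul_assoc, mul_assoc, ← mul_assoc
      ((HNNExtension.of (ψ^[i + j + ℓ] g') : HNNExtension G ⊤ ψ.range φ))⁻¹,
      ← map_inv, ← map_mul]
    congr 2
    rw [mul_comm g]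
    group
  calc x (HNNExtension.t ^ (-(j : ℤ)) * HNNExtension.of g * HNNExtension.t ^ (i + j + ℓ + h))
      = x ((HNNExtension.of (ψ^[ℓ] (ψ^[i] g')))⁻¹ *
        ((HNNExtension.t ^ j)⁻¹ *
          (HNNExtension.of (g * ψ^[i + j + ℓ] g') * HNNExtension.t ^ (i + j + ℓ + h)))) := by
        rw [e2]
    _ = x ((HNNExtension.t ^ j)⁻¹ *
          (HNNExtension.of (g * ψ^[i + j + ℓ] g') * HNNExtension.t ^ (i + j + ℓ + h))) :=
        hx (ψ^[i] g') _
    _ = _ := by rw [← e1]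
end

section
/- If N is odd, then the function x : BS(1,N) → ℤ/2ℤ defined on normal forms by x(b^(−j) aᵏ bⁱ) = i + j + k (mod 2) is a well-defined proper 2-coloring of the Cayley graph of BS(1,N) with respect to {a, b}: for every g, x(ga) ≠ x(g) and x(gb) ≠ x(g). -/
/-- The Baumslag–Solitar group `BS(1,N) = ⟨a, b | b a b⁻¹ = aᴺ⟩`. -/
abbrev BSGroup (N : ℕ) : Type :=
  PresentedGroup ({FreeGroup.of true * FreeGroup.of false * (FreeGroup.of true)⁻¹ *
    ((FreeGroup.of false) ^ N)⁻¹} : Set (FreeGroup Bool))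

/-- The generator `a` of `BS(1,N)`. -/
def bsa (N : ℕ) : BSGroup N := PresentedGroup.of false

/-- The generator `b` of `BS(1,N)`. -/
def bsb (N : ℕ) : BSGroup N := PresentedGroup.of true

/-- If `N` is odd, the function defined on normal forms by
`x(b^(−j) aᵏ bⁱ) = i + j + k (mod 2)` is a well-defined proper 2-coloring of the Cayley graph
of `BS(1,N)` with respect to `{a, b}`. -/
theorem stmt7 (N : ℕ) (hN : 2 ≤ N) (hNo : Odd N) :
    ∃ x : BSGroup N → ZMod 2,
      (∀ (j i : ℕ) (k : ℤ), (¬ (N : ℤ) ∣ k ∨ i = 0 ∨ j = 0) →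
        x ((bsb N) ^ (-(j : ℤ)) * (bsa N) ^ k * (bsb N) ^ i) =
          (i : ZMod 2) + (j : ZMod 2) + (k : ZMod 2)) ∧
      ∀ g : BSGroup N, x (g * bsa N) ≠ x g ∧ x (g * bsb N) ≠ x g := by
  -- the map sending both generators to 1 ∈ ZMod 2
  set f : Bool → Multiplicative (ZMod 2) := fun _ => Multiplicative.ofAdd 1 with hf
  have hrel : ∀ r ∈ ({FreeGroup.of true * FreeGroup.of false * (FreeGroup.of true)⁻¹ *
      ((FreeGroup.of false) ^ N)⁻¹} : Set (FreeGroup Bool)), FreeGroup.lift f r = 1 := by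
    intro r hr
    rw [Set.mem_singleton_iff] at hr
    subst hr
    obtain ⟨m, hm⟩ := hNo
    simp only [map_mul, map_inv, map_pow, FreeGroup.lift_apply_of, hf]
    have hsq : (Multiplicative.ofAdd (1 : ZMod 2)) ^ 2 = 1 := by decide
    have hpow : (Multiplicative.ofAdd (1 : ZMod 2)) ^ N = Multiplicative.ofAdd 1 := by
      rw [hm, pow_add, pow_mul, hsq, one_pow, one_mul, pow_one]
    rw [hpow]
    decide
  set φ : BSGroup N →* Multiplicative (ZMod 2) := PresentedGroup.toGroup hrel with hφ
  have hφa : φ (bsa N) = Multiplicative.ofAdd 1 := PresentedGroup.toGroup.of hrel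
  have hφb : φ (bsb N) = Multiplicative.ofAdd 1 := PresentedGroup.toGroup.of hrel
  refine ⟨fun g => Multiplicative.toAdd (φ g), ?_, ?_⟩
  · intro j i k _
    simp only [map_mul, map_zpow, map_pow, hφa, hφb, toAdd_mul, toAdd_zpow, toAdd_pow,
      toAdd_ofAdd, zsmul_eq_mul, nsmul_eq_mul, smul_eq_mul, mul_one]
    push_cast
    rw [CharTwo.neg_eq]
    ring
  · intro g
    constructor <;>
    · simp only [map_mul, hφa, hφb, toAdd_mul, toAdd_ofAdd, ne_eq, add_eq_left]
      exact one_ne_zero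
end

section
/- If N is odd, the set of proper 2-colorings of the Cayley graph of BS(1,N) with respect to {a,b} has exactly two elements. -/
lemma fin2_ne_iff : ∀ x y : Fin 2, x ≠ y ↔ y = x + 1 := by decide

/-- If `N` is odd, the set of proper 2-colorings of the Cayley graph of `BS(1,N)` with respect
to `{a, b}` has exactly two elements. -/
theorem stmt8 (N : ℕ) (hN : 2 ≤ N) (hNo : Odd N) :
    Set.ncard {x : BSGroup N → Fin 2 |
      ∀ g : BSGroup N, x g ≠ x (g * bsa N) ∧ x g ≠ x (g * bsb N)} = 2 := by
  have hrel : ∀ r ∈ ({FreeGroup.of true * FreeGroup.of false * (FreeGroup.of true)⁻¹ *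
      ((FreeGroup.of false) ^ N)⁻¹} : Set (FreeGroup Bool)),
      FreeGroup.lift (fun _ : Bool => Multiplicative.ofAdd (1 : ZMod 2)) r = 1 := by
    rintro r rfl
    simp only [map_mul, map_inv, map_pow, FreeGroup.lift_apply_of]
    have : (Multiplicative.ofAdd (1 : ZMod 2)) ^ N = Multiplicative.ofAdd (1 : ZMod 2) := by
      rw [← ofAdd_nsmul]
      congr 1
      rw [nsmul_eq_mul, mul_one, ← ZMod.natCast_mod, Nat.odd_iff.mp hNo]
      norm_num
    rw [this]
    decide
  set c : BSGroup N →* Multiplicative (ZMod 2) := PresentedGroup.toGroup hrel with hc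
  have hca : c (bsa N) = Multiplicative.ofAdd (1 : ZMod 2) := PresentedGroup.toGroup.of hrel
  have hcb : c (bsb N) = Multiplicative.ofAdd (1 : ZMod 2) := PresentedGroup.toGroup.of hrel
  set ψ : BSGroup N → Fin 2 := fun g => ((c g).toAdd : ZMod 2) with hψ
  have hψ1 : ψ 1 = 0 := by simp [hψ]
  have hψmul : ∀ g1 g2, ψ (g1 * g2) = ψ g1 + ψ g2 := by
    intro g1 g2
    show ((c (g1 * g2)).toAdd : ZMod 2) = (c g1).toAdd + (c g2).toAdd
    rw [map_mul, toAdd_mul]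
  have hψav : ψ (bsa N) = 1 := by
    show ((c (bsa N)).toAdd : ZMod 2) = 1
    rw [hca]; rfl
  have hψbv : ψ (bsb N) = 1 := by
    show ((c (bsb N)).toAdd : ZMod 2) = 1
    rw [hcb]; rfl
  have hψa : ∀ g, ψ (g * bsa N) = ψ g + 1 := fun g => by rw [hψmul, hψav]
  have hψb : ∀ g, ψ (g * bsb N) = ψ g + 1 := fun g => by rw [hψmul, hψbv]
  have key : ∀ x ∈ {x : BSGroup N → Fin 2 |
      ∀ g : BSGroup N, x g ≠ x (g * bsa N) ∧ x g ≠ x (g * bsb N)},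
      ∀ g, x g = x 1 + ψ g := by
    intro x hx
    have hTop : ∀ g : BSGroup N, g ∈ (⊤ : Subgroup (BSGroup N)) →
        ∀ h, x (h * g) = x h + ψ g := by
      rw [← PresentedGroup.closure_range_of]
      intro g hg
      induction hg using Subgroup.closure_induction with
      | mem s hs =>
        obtain ⟨t, rfl⟩ := hs
        intro h
        cases t with
        | false =>
          have := (hx h).1
          rw [fin2_ne_iff] at this
          rw [show PresentedGroup.of false = bsa N from rfl, this, hψav]
        | true =>
          have := (hx h).2
          rw [fin2_ne_iff] at this
          rw [show PresentedGroup.of true = bsb N from rfl, this, hψbv]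
      | one => intro h; simp [hψ1]
      | mul g1 g2 _ _ ih1 ih2 =>
        intro h
        rw [← mul_assoc, ih2, ih1, hψmul, add_assoc]
      | inv g _ ih =>
        intro h
        have h1 := ih (h * g⁻¹)
        rw [inv_mul_cancel_right] at h1
        have h2 : ψ g⁻¹ = -ψ g := by
          show ((c g⁻¹).toAdd : ZMod 2) = -(c g).toAdd
          rw [map_inv, toAdd_inv]
        rw [h2]
        revert h1
        generalize x (h * g⁻¹) = u
        generalize x h = v
        generalize ψ g = w
        revert u v w
        decide
    intro g
    have := hTop g (Subgroup.mem_top g) 1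
    rwa [one_mul] at this
  have hmem : ∀ x0 : Fin 2, (fun g => x0 + ψ g) ∈ {x : BSGroup N → Fin 2 |
      ∀ g : BSGroup N, x g ≠ x (g * bsa N) ∧ x g ≠ x (g * bsb N)} := by
    intro x0 g
    constructor
    · show x0 + ψ g ≠ x0 + ψ (g * bsa N)
      rw [hψa]
      generalize ψ g = w
      revert x0 w; decide
    · show x0 + ψ g ≠ x0 + ψ (g * bsb N)
      rw [hψb]
      generalize ψ g = w
      revert x0 w; decide
  have hset : {x : BSGroup N → Fin 2 |
      ∀ g : BSGroup N, x g ≠ x (g * bsa N) ∧ x g ≠ x (g * bsb N)} =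
      {(fun g => 0 + ψ g), (fun g => 1 + ψ g)} := by
    ext x
    constructor
    · intro hx
      have hk := key x hx
      have hx1 : x 1 = 0 ∨ x 1 = 1 := by omega
      rcases hx1 with h1 | h1
      · left; funext g; rw [hk g, h1]
      · right; funext g; rw [hk g, h1]
    · rintro (rfl | rfl)
      · exact hmem 0
      · exact hmem 1
  rw [hset]
  apply Set.ncard_pair
  intro hcontra
  have := congrFun hcontra 1
  rw [hψ1] at this
  simp at this
end

section
/- For every N ≥ 2 and every n ≥ 5, every locally admissible pattern for the n-coloring subshift of BS(1,N) is globally admissible: if p : F → {0,…,n−1} (F ⊆ BS(1,N) finite) satisfies p(g) ≠ p(gs) whenever g, gs ∈ F and s ∈ {a,b}, then there exists a proper n-coloring x of the full Cayley graph with x|_F = p. -/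
lemma Nne (N : ℕ) (hN : 2 ≤ N) : (N:ℚ) ≠ 0 := Nat.cast_ne_zero.mpr (by omega)

lemma addRight_pow_apply (N : ℕ) (q : ℚ) : ((Equiv.addRight (1:ℚ))^N) q = q + N := by
  induction N with
  | zero => simp
  | succ k ih =>
    rw [pow_succ', Equiv.Perm.mul_apply, Equiv.coe_addRight, ih]
    push_cast; ring

noncomputable def bsrep (N : ℕ) (hN : 2 ≤ N) : BSGroup N →* Equiv.Perm ℚ :=
  PresentedGroup.toGroup (f := fun t => if t then Equiv.mulRight₀ (N:ℚ) (Nne N hN)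
      else Equiv.addRight 1) (by
    intro r hr
    rw [Set.mem_singleton_iff] at hr
    subst hr
    simp only [map_mul, map_inv, map_pow, FreeGroup.lift_apply_of, if_true, if_false, Bool.false_eq_true]
    rw [mul_inv_eq_one]
    ext q
    simp only [Equiv.Perm.mul_apply, addRight_pow_apply, Equiv.Perm.inv_def]
    simp only [Equiv.mulRight₀, Equiv.coe_fn_mk, Equiv.coe_fn_symm_mk, Equiv.coe_addRight]
    simp [Units.mulRight, addRight_pow_apply]
    field_simp)

lemma bsrep_a (N : ℕ) (hN : 2 ≤ N) : bsrep N hN (bsa N) = Equiv.addRight 1 := by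
  simp [bsrep, bsa, PresentedGroup.toGroup.of]

lemma bsrep_b (N : ℕ) (hN : 2 ≤ N) : bsrep N hN (bsb N) = Equiv.mulRight₀ (N:ℚ) (Nne N hN) := by
  simp [bsrep, bsb, PresentedGroup.toGroup.of]

lemma bsa_ne_one (N : ℕ) (hN : 2 ≤ N) : bsa N ≠ 1 := by
  intro h
  have := congrArg (fun σ => (bsrep N hN σ) 0) h
  simp [bsrep_a] at this

lemma bsb_ne_one (N : ℕ) (hN : 2 ≤ N) : bsb N ≠ 1 := by
  intro h
  have := congrArg (fun σ => (bsrep N hN σ) 1) h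
  simp [bsrep_b, Equiv.mulRight₀] at this
  omega
noncomputable def pickColor {n : ℕ} (S : Finset (Fin n)) (h : S.card < n) : {c : Fin n // c ∉ S} :=
  have hne : Sᶜ.Nonempty := Finset.card_pos.mp (by rw [Finset.card_compl, Fintype.card_fin]; omega)
  ⟨hne.choose, Finset.mem_compl.mp hne.choose_spec⟩

section Greedy
variable {V : Type*}

open Classical in
noncomputable def greedy (n : ℕ) (nb : V → Finset V) (hdeg : ∀ v, (nb v).card < n)
    (m : V → ℕ) (F : Set V) (p : V → Fin n) (v : V) : Fin n :=
  if v ∈ F then p v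
  else (pickColor ((((nb v).filter (fun w => m w < m v)).attach).image
      (fun w => greedy n nb hdeg m F p w.1)) (by
        refine lt_of_le_of_lt (Finset.card_image_le.trans ?_) (hdeg v)
        rw [Finset.card_attach]
        exact Finset.card_filter_le _ _)).1
termination_by m v
decreasing_by all_goals exact (Finset.mem_filter.mp w.2).2

variable {n : ℕ} {nb : V → Finset V} {hdeg : ∀ v, (nb v).card < n} {m : V → ℕ}
  {F : Set V} {p : V → Fin n}

lemma greedy_mem {v : V} (hv : v ∈ F) : greedy n nb hdeg m F p v = p v := by
  rw [greedy]; exact if_pos hv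

lemma greedy_ne {v w : V} (hv : v ∉ F) (hw : w ∈ nb v) (hmw : m w < m v) :
    greedy n nb hdeg m F p v ≠ greedy n nb hdeg m F p w := by
  rw [greedy, if_neg hv]
  intro h
  apply (pickColor _ _).2
  rw [h]
  exact Finset.mem_image.mpr ⟨⟨w, Finset.mem_filter.mpr ⟨hw, hmw⟩⟩, Finset.mem_attach _ _, rfl⟩

lemma greedy_proper (hsym : ∀ v w, w ∈ nb v → v ∈ nb w)
    (hmF : ∀ v ∈ F, m v = 0)
    (hmne : ∀ v w, w ∈ nb v → (v ∉ F ∨ w ∉ F) → m v ≠ m w)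
    (hpF : ∀ v ∈ F, ∀ w ∈ F, w ∈ nb v → p v ≠ p w) :
    ∀ v w, w ∈ nb v → greedy n nb hdeg m F p v ≠ greedy n nb hdeg m F p w := by
  intro v w hw
  by_cases hv : v ∈ F <;> by_cases hwF : w ∈ F
  · rw [greedy_mem hv, greedy_mem hwF]; exact hpF v hv w hwF hw
  · have h1 := hmne v w hw (Or.inr hwF)
    have h2 := hmF v hv
    exact (greedy_ne (hdeg := hdeg) hwF (hsym v w hw) (by omega)).symm
  · have h1 := hmne v w hw (Or.inl hv)
    have h2 := hmF w hwF
    exact greedy_ne hv hw (by omega)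
  · have h1 := hmne v w hw (Or.inl hv)
    rcases lt_or_gt_of_ne h1 with h | h
    · exact (greedy_ne (hdeg := hdeg) hwF (hsym v w hw) h).symm
    · exact greedy_ne hv hw h

end Greedy

/- main theorem part, appended after group + greedy parts -/
instance : Countable (FreeGroup Bool) := FreeGroup.toWord_injective.countable
instance (N : ℕ) : Countable (BSGroup N) := Quotient.countable


/-- For `N ≥ 2` and `n ≥ 5`, every locally admissible pattern for the `n`-coloring subshift of
`BS(1,N)` is globally admissible: any proper partial `n`-coloring of a finite set `F` extends
to a proper `n`-coloring of the whole Cayley graph. -/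
theorem stmt9 (N n : ℕ) (hN : 2 ≤ N) (hn : 5 ≤ n)
    (F : Set (BSGroup N)) (hF : F.Finite) (p : BSGroup N → Fin n)
    (hp : ∀ g ∈ F, (g * bsa N ∈ F → p g ≠ p (g * bsa N)) ∧
      (g * bsb N ∈ F → p g ≠ p (g * bsb N))) :
    ∃ x : BSGroup N → Fin n,
      (∀ g : BSGroup N, x g ≠ x (g * bsa N) ∧ x g ≠ x (g * bsb N)) ∧
      ∀ g ∈ F, x g = p g := by
  classical
  obtain ⟨enc, henc⟩ := (countable_iff_exists_injective (BSGroup N)).mp inferInstance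
  have hane : bsa N ≠ 1 := bsa_ne_one N hN
  have hbne : bsb N ≠ 1 := bsb_ne_one N hN
  obtain ⟨nb, hnb⟩ : ∃ nb : BSGroup N → Finset (BSGroup N),
      nb = fun g => {g * bsa N, g * (bsa N)⁻¹, g * bsb N, g * (bsb N)⁻¹} := ⟨_, rfl⟩
  obtain ⟨m, hm⟩ : ∃ m : BSGroup N → ℕ,
      m = fun v => if v ∈ F then 0 else enc v + 1 := ⟨_, rfl⟩
  have hdeg : ∀ v, (nb v).card < n := by
    intro v
    have h1 := Finset.card_insert_le (v * bsa N)
      ({v * (bsa N)⁻¹, v * bsb N, v * (bsb N)⁻¹} : Finset (BSGroup N))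
    have h2 := Finset.card_insert_le (v * (bsa N)⁻¹)
      ({v * bsb N, v * (bsb N)⁻¹} : Finset (BSGroup N))
    have h3 := Finset.card_insert_le (v * bsb N) ({v * (bsb N)⁻¹} : Finset (BSGroup N))
    have h4 : ({v * (bsb N)⁻¹} : Finset (BSGroup N)).card = 1 := Finset.card_singleton _
    simp only [hnb]
    omega
  have hmF : ∀ v ∈ F, m v = 0 := fun v hv => by simp [hm, hv]
  have hnbne : ∀ v w : BSGroup N, w ∈ nb v → w ≠ v := by
    intro v w hw
    simp only [hnb, Finset.mem_insert, Finset.mem_singleton] at hw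
    rcases hw with h | h | h | h <;> subst h <;>
      simp [mul_eq_left, hane, hbne, inv_eq_one]
  have hmne : ∀ v w : BSGroup N, w ∈ nb v → (v ∉ F ∨ w ∉ F) → m v ≠ m w := by
    intro v w hw hor
    have hne := hnbne v w hw
    by_cases hv : v ∈ F <;> by_cases hwF : w ∈ F <;>
      simp only [hm, hv, hwF, if_true, if_false] <;> try omega
    · tauto
    · intro h
      exact hne (henc (by omega)).symm
  have hsym : ∀ v w : BSGroup N, w ∈ nb v → v ∈ nb w := by
    intro v w hw
    simp only [hnb, Finset.mem_insert, Finset.mem_singleton] at hw ⊢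
    rcases hw with h | h | h | h <;> subst h <;> simp
  have hpF : ∀ v ∈ F, ∀ w ∈ F, w ∈ nb v → p v ≠ p w := by
    intro v hv w hwF hw
    simp only [hnb, Finset.mem_insert, Finset.mem_singleton] at hw
    rcases hw with h | h | h | h <;> subst h
    · exact (hp v hv).1 hwF
    · have hv' : v = v * (bsa N)⁻¹ * bsa N := by group
      exact fun he => (hp _ hwF).1 (hv' ▸ hv) (by rw [← hv']; exact he.symm)
    · exact (hp v hv).2 hwF
    · have hv' : v = v * (bsb N)⁻¹ * bsb N := by group
      exact fun he => (hp _ hwF).2 (hv' ▸ hv) (by rw [← hv']; exact he.symm)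
  refine ⟨greedy n nb hdeg m F p, ?_, fun g hg => greedy_mem hg⟩
  intro g
  have hmain := greedy_proper (hdeg := hdeg) (p := p) hsym hmF hmne hpF
  constructor
  · exact hmain g (g * bsa N) (by simp [hnb])
  · exact hmain g (g * bsb N) (by simp [hnb])
end

section
/- For n ≥ 3 and m ≥ 1, every proper n-coloring of the rectangle R_m = {aᵏ bⁱ : 0 ≤ k < Nᵐ, 0 ≤ i < m} ⊆ BS(1,N) extends to a proper n-coloring of R_{m+1}. -/
/-- The rectangle `R_m = {aᵏ bⁱ : 0 ≤ k < Nᵐ, 0 ≤ i < m}` in `BS(1,N)`. -/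
def bsRect (N m : ℕ) : Set (BSGroup N) :=
  {g | ∃ k i : ℕ, k < N ^ m ∧ i < m ∧ g = (bsa N) ^ k * (bsb N) ^ i}

lemma bs_rel (N : ℕ) : bsb N * bsa N = (bsa N) ^ N * bsb N := by
  have h : (PresentedGroup.mk _ (FreeGroup.of true * FreeGroup.of false * (FreeGroup.of true)⁻¹ *
      ((FreeGroup.of false) ^ N)⁻¹) : BSGroup N) = 1 := by
    apply (QuotientGroup.eq_one_iff _).mpr
    exact Subgroup.subset_normalClosure (Set.mem_singleton _)
  rw [map_mul, map_mul, map_mul, map_inv, map_inv, map_pow] at h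
  have h2 : bsb N * bsa N * (bsb N)⁻¹ * ((bsa N) ^ N)⁻¹ = 1 := h
  rw [mul_inv_eq_one, mul_inv_eq_iff_eq_mul] at h2
  exact h2

lemma bs_rel_pow (N j : ℕ) : bsb N * (bsa N) ^ j = (bsa N) ^ (N * j) * bsb N := by
  induction j with
  | zero => simp
  | succ j ih =>
    rw [pow_succ, ← mul_assoc, ih, mul_assoc, bs_rel, ← mul_assoc, ← pow_add]
    ring_nf

lemma bs_pow_comm (N i j : ℕ) :
    (bsb N) ^ i * (bsa N) ^ j = (bsa N) ^ (N ^ i * j) * (bsb N) ^ i := by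
  induction i generalizing j with
  | zero => simp
  | succ i ih =>
    rw [pow_succ, mul_assoc, bs_rel_pow, ← mul_assoc, ih, mul_assoc, ← pow_succ]
    rw [show N ^ i * (N * j) = N ^ (i+1) * j by ring]

lemma bs_mul_a (N k i : ℕ) :
    (bsa N) ^ k * (bsb N) ^ i * bsa N = (bsa N) ^ (k + N ^ i) * (bsb N) ^ i := by
  have := bs_pow_comm N i 1
  rw [pow_one, mul_one] at this
  rw [mul_assoc, this, ← mul_assoc, ← pow_add]

lemma bs_mul_b (N k i : ℕ) :
    (bsa N) ^ k * (bsb N) ^ i * bsb N = (bsa N) ^ k * (bsb N) ^ (i + 1) := by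
  rw [mul_assoc, ← pow_succ]

/-- affine translation by 1 as a permutation of ℚ -/
def affAdd : Equiv.Perm ℚ :=
  ⟨fun x => x + 1, fun x => x - 1, fun x => by ring, fun x => by ring⟩

/-- multiplication by a nonzero rational as a permutation of ℚ -/
def affMul (q : ℚ) (hq : q ≠ 0) : Equiv.Perm ℚ :=
  ⟨fun x => q * x, fun x => q⁻¹ * x, fun x => by field_simp, fun x => by field_simp⟩

lemma affAdd_pow (j : ℕ) (x : ℚ) : ((affAdd ^ j) : Equiv.Perm ℚ) x = x + j := by
  induction j generalizing x with
  | zero => simp [affAdd]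
  | succ j ih =>
    rw [pow_succ, Equiv.Perm.mul_apply, ih]
    simp [affAdd]; push_cast; ring

lemma affMul_pow (q : ℚ) (hq : q ≠ 0) (j : ℕ) (x : ℚ) :
    ((affMul q hq ^ j) : Equiv.Perm ℚ) x = q ^ j * x := by
  induction j generalizing x with
  | zero => simp [affMul]
  | succ j ih =>
    rw [pow_succ, Equiv.Perm.mul_apply, ih]
    simp [affMul]; ring

noncomputable def bsToPerm (N : ℕ) (hN : 2 ≤ N) : BSGroup N →* Equiv.Perm ℚ :=
  PresentedGroup.toGroup (f := fun b : Bool =>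
    if b then affMul (N : ℚ) (by positivity) else affAdd)
    (by
      intro r hr
      simp only [Set.mem_singleton_iff] at hr
      subst hr
      rw [map_mul, map_mul, map_mul, map_inv, map_inv, map_pow]
      simp only [FreeGroup.lift_apply_of, Bool.false_eq_true, if_false, if_true]
      rw [mul_inv_eq_one, mul_inv_eq_iff_eq_mul]
      ext x
      rw [Equiv.Perm.mul_apply, Equiv.Perm.mul_apply, affAdd_pow]
      simp [affMul, affAdd, Equiv.Perm.inv_def]
      ring)

lemma bsToPerm_eval (N : ℕ) (hN : 2 ≤ N) (k i : ℕ) (x : ℚ) :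
    (bsToPerm N hN ((bsa N) ^ k * (bsb N) ^ i)) x = (N : ℚ) ^ i * x + k := by
  rw [map_mul, map_pow, map_pow, Equiv.Perm.mul_apply]
  unfold bsToPerm bsa bsb
  rw [PresentedGroup.toGroup.of, PresentedGroup.toGroup.of]
  simp only [Bool.false_eq_true, if_false, if_true]
  rw [affMul_pow, affAdd_pow]

lemma bs_inj (N : ℕ) (hN : 2 ≤ N) {k i k' i' : ℕ}
    (h : (bsa N) ^ k * (bsb N) ^ i = (bsa N) ^ k' * (bsb N) ^ i') : k = k' ∧ i = i' := by
  have h0 := congrArg (fun g => (bsToPerm N hN g) 0) h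
  have h1 := congrArg (fun g => (bsToPerm N hN g) 1) h
  simp only [bsToPerm_eval] at h0 h1
  rw [mul_zero, zero_add, mul_zero, zero_add] at h0
  have hk : k = k' := Nat.cast_injective h0
  subst hk
  rw [mul_one, mul_one] at h1
  have : (N : ℚ) ^ i = (N : ℚ) ^ i' := by linarith
  have hi : N ^ i = N ^ i' := by exact_mod_cast this
  exact ⟨rfl, Nat.pow_right_injective hN hi⟩

/-- a color different from both `x` and `y`, assuming `3 ≤ n` -/
def pick3 {n : ℕ} (hn : 3 ≤ n) (x y : Fin n) : Fin n :=
  if (⟨0, by omega⟩ : Fin n) ≠ x ∧ (⟨0, by omega⟩ : Fin n) ≠ y then ⟨0, by omega⟩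
  else if (⟨1, by omega⟩ : Fin n) ≠ x ∧ (⟨1, by omega⟩ : Fin n) ≠ y then ⟨1, by omega⟩
  else ⟨2, by omega⟩

lemma pick3_spec {n : ℕ} (hn : 3 ≤ n) (x y : Fin n) :
    pick3 hn x y ≠ x ∧ pick3 hn x y ≠ y := by
  unfold pick3
  split_ifs with h1 h2
  · exact h1
  · exact h2
  · simp only [not_and_or, not_not] at h1 h2
    have hne : ∀ (p q : ℕ) (hp : p < n) (hq : q < n), p ≠ q → (⟨p, hp⟩ : Fin n) ≠ ⟨q, hq⟩ :=
      fun p q hp hq hpq h => hpq (by injection h)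
    rcases h1 with h1 | h1 <;> rcases h2 with h2 | h2
    · exact absurd (h1.trans h2.symm) (hne 0 1 (by omega) (by omega) (by omega))
    · exact ⟨h1 ▸ hne 2 0 (by omega) (by omega) (by omega),
        h2 ▸ hne 2 1 (by omega) (by omega) (by omega)⟩
    · exact ⟨h2 ▸ hne 2 1 (by omega) (by omega) (by omega),
        h1 ▸ hne 2 0 (by omega) (by omega) (by omega)⟩
    · exact absurd (h1.trans h2.symm) (hne 0 1 (by omega) (by omega) (by omega))

/-- greedy coloring of one row: below `start` use `old`, else pick a color different from
the cell `step` to the left and the cell below. -/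
def rowFun {n : ℕ} (hn : 3 ≤ n) (below old : ℕ → Fin n) (step start : ℕ)
    (hstep : 0 < step) : ℕ → Fin n
  | k =>
    if k < start then old k
    else pick3 hn
      (if h : step ≤ k then rowFun hn below old step start hstep (k - step) else below k)
      (below k)
  decreasing_by omega

lemma rowFun_lt {n : ℕ} (hn : 3 ≤ n) (below old : ℕ → Fin n) (step start : ℕ)
    (hstep : 0 < step) (k : ℕ) (hk : k < start) :
    rowFun hn below old step start hstep k = old k := by
  rw [rowFun, if_pos hk]

lemma rowFun_ge {n : ℕ} (hn : 3 ≤ n) (below old : ℕ → Fin n) (step start : ℕ)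
    (hstep : 0 < step) (k : ℕ) (hk : ¬ k < start) (hk2 : step ≤ k) :
    rowFun hn below old step start hstep k =
      pick3 hn (rowFun hn below old step start hstep (k - step)) (below k) := by
  rw [rowFun]
  rw [if_neg hk, dif_pos hk2]

/-- the grid coloring: old colors on `R_m`, greedily extended. -/
def gridD (N n m : ℕ) (hN : 2 ≤ N) (hn : 3 ≤ n) (c : BSGroup N → Fin n) : ℕ → ℕ → Fin n
  | 0 => rowFun hn (fun _ => ⟨0, by omega⟩) (fun k => c ((bsa N) ^ k)) 1 (N ^ m) (by omega)
  | (i + 1) =>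
    rowFun hn (gridD N n m hN hn c i) (fun k => c ((bsa N) ^ k * (bsb N) ^ (i + 1)))
      (N ^ (i + 1)) (if i + 1 < m then N ^ m else 0) (by positivity)

lemma grid_old (N n m : ℕ) (hN : 2 ≤ N) (hn : 3 ≤ n) (c : BSGroup N → Fin n)
    (i k : ℕ) (hi : i < m) (hk : k < N ^ m) :
    gridD N n m hN hn c i k = c ((bsa N) ^ k * (bsb N) ^ i) := by
  cases i with
  | zero => rw [gridD, rowFun_lt _ _ _ _ _ _ _ hk, pow_zero, mul_one]
  | succ j =>
    rw [gridD, if_pos hi, rowFun_lt _ _ _ _ _ _ _ hk]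

lemma grid_a (N n m : ℕ) (hN : 2 ≤ N) (hn : 3 ≤ n) (hm : 1 ≤ m) (c : BSGroup N → Fin n)
    (hc : ∀ g ∈ bsRect N m,
      (g * bsa N ∈ bsRect N m → c g ≠ c (g * bsa N)) ∧
      (g * bsb N ∈ bsRect N m → c g ≠ c (g * bsb N)))
    (i k : ℕ) (hi : i ≤ m) (hk : k + N ^ i < N ^ (m + 1)) :
    gridD N n m hN hn c i (k + N ^ i) ≠ gridD N n m hN hn c i k := by
  by_cases hcase : i < m ∧ k + N ^ i < N ^ m
  · -- both cells are old
    obtain ⟨him, hkm⟩ := hcase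
    have hk1 : k < N ^ m := by
      have : 0 < N ^ i := by positivity
      omega
    rw [grid_old N n m hN hn c i _ him hkm, grid_old N n m hN hn c i k him hk1]
    have hmem : (bsa N) ^ k * (bsb N) ^ i ∈ bsRect N m := ⟨k, i, hk1, him, rfl⟩
    have hmem2 : ((bsa N) ^ k * (bsb N) ^ i) * bsa N ∈ bsRect N m := by
      rw [bs_mul_a]; exact ⟨k + N ^ i, i, hkm, him, rfl⟩
    have := (hc _ hmem).1 hmem2
    rw [bs_mul_a] at this
    exact this.symm
  · -- right cell is new: it was colored by pick3 avoiding the left cell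
    have hstep : N ^ i ≤ k + N ^ i := by omega
    have hsub : k + N ^ i - N ^ i = k := by omega
    cases i with
    | zero =>
      have hnlt : ¬ k + N ^ 0 < N ^ m := fun hlt => hcase ⟨hm, hlt⟩
      simp only [pow_zero] at hnlt hstep hsub ⊢
      rw [gridD, rowFun_ge _ _ _ _ _ _ _ hnlt (by omega)]
      rw [show k + 1 - 1 = k from by omega]
      exact (pick3_spec hn _ _).1
    | succ j =>
      have hnlt : ¬ k + N ^ (j + 1) < (if j + 1 < m then N ^ m else 0) := by
        split_ifs with hjm
        · exact fun hlt => hcase ⟨hjm, hlt⟩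
        · omega
      rw [gridD, rowFun_ge _ _ _ _ _ _ _ hnlt hstep, hsub]
      exact (pick3_spec hn _ _).1

lemma grid_b (N n m : ℕ) (hN : 2 ≤ N) (hn : 3 ≤ n) (hm : 1 ≤ m) (c : BSGroup N → Fin n)
    (hc : ∀ g ∈ bsRect N m,
      (g * bsa N ∈ bsRect N m → c g ≠ c (g * bsa N)) ∧
      (g * bsb N ∈ bsRect N m → c g ≠ c (g * bsb N)))
    (i k : ℕ) (hi : i + 1 ≤ m) (hk : k < N ^ (m + 1)) :
    gridD N n m hN hn c (i + 1) k ≠ gridD N n m hN hn c i k := by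
  by_cases hcase : i + 1 < m ∧ k < N ^ m
  · obtain ⟨him, hkm⟩ := hcase
    rw [grid_old N n m hN hn c (i+1) k him hkm, grid_old N n m hN hn c i k (by omega) hkm]
    have hmem : (bsa N) ^ k * (bsb N) ^ i ∈ bsRect N m := ⟨k, i, hkm, by omega, rfl⟩
    have hmem2 : ((bsa N) ^ k * (bsb N) ^ i) * bsb N ∈ bsRect N m := by
      rw [bs_mul_b]; exact ⟨k, i + 1, hkm, him, rfl⟩
    have := (hc _ hmem).2 hmem2
    rw [bs_mul_b] at this
    exact this.symm
  · have hnlt : ¬ k < (if i + 1 < m then N ^ m else 0) := by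
      split_ifs with hjm
      · exact fun hlt => hcase ⟨hjm, hlt⟩
      · omega
    rw [gridD]
    by_cases hstep : N ^ (i + 1) ≤ k
    · rw [rowFun_ge _ _ _ _ _ _ _ hnlt hstep]
      exact (pick3_spec hn _ _).2
    · rw [rowFun, if_neg hnlt, dif_neg hstep]
      exact (pick3_spec hn _ _).2

open Classical in
noncomputable def cExt (N n m : ℕ) (hN : 2 ≤ N) (hn : 3 ≤ n) (c : BSGroup N → Fin n) :
    BSGroup N → Fin n :=
  fun g => if h : ∃ p : ℕ × ℕ, g = (bsa N) ^ p.1 * (bsb N) ^ p.2 then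
    gridD N n m hN hn c h.choose.2 h.choose.1 else c g

lemma cExt_eval (N n m : ℕ) (hN : 2 ≤ N) (hn : 3 ≤ n) (c : BSGroup N → Fin n) (k i : ℕ) :
    cExt N n m hN hn c ((bsa N) ^ k * (bsb N) ^ i) = gridD N n m hN hn c i k := by
  have h : ∃ p : ℕ × ℕ, (bsa N) ^ k * (bsb N) ^ i = (bsa N) ^ p.1 * (bsb N) ^ p.2 := ⟨(k, i), rfl⟩
  rw [cExt, dif_pos h]
  obtain ⟨hk, hi⟩ := bs_inj N hN h.choose_spec
  rw [← hk, ← hi]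

/-- For `n ≥ 3` and `m ≥ 1`, every proper `n`-coloring of the rectangle `R_m` extends to a
proper `n`-coloring of `R_{m+1}`. -/
theorem stmt10 (N n m : ℕ) (hN : 2 ≤ N) (hn : 3 ≤ n) (hm : 1 ≤ m)
    (c : BSGroup N → Fin n)
    (hc : ∀ g ∈ bsRect N m,
      (g * bsa N ∈ bsRect N m → c g ≠ c (g * bsa N)) ∧
      (g * bsb N ∈ bsRect N m → c g ≠ c (g * bsb N))) :
    ∃ c' : BSGroup N → Fin n,
      (∀ g ∈ bsRect N (m + 1),
        (g * bsa N ∈ bsRect N (m + 1) → c' g ≠ c' (g * bsa N)) ∧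
        (g * bsb N ∈ bsRect N (m + 1) → c' g ≠ c' (g * bsb N))) ∧
      ∀ g ∈ bsRect N m, c' g = c g := by
  refine ⟨cExt N n m hN hn c, ?_, ?_⟩
  · rintro g ⟨k, i, hk, hi, rfl⟩
    constructor
    · intro hga
      rw [bs_mul_a] at hga
      obtain ⟨k', i', hk', hi', he⟩ := hga
      obtain ⟨hkk, hii⟩ := bs_inj N hN he.symm
      rw [bs_mul_a, cExt_eval, cExt_eval]
      exact (grid_a N n m hN hn hm c hc i k (by omega) (by omega)).symm
    · intro hgb
      rw [bs_mul_b] at hgb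
      obtain ⟨k', i', hk', hi', he⟩ := hgb
      obtain ⟨hkk, hii⟩ := bs_inj N hN he.symm
      rw [bs_mul_b, cExt_eval, cExt_eval]
      exact (grid_b N n m hN hn hm c hc i k (by omega) (by omega)).symm
  · rintro g ⟨k, i, hk, hi, rfl⟩
    rw [cExt_eval, grid_old N n m hN hn c i k hi hk]
end

section
/- If N ≡ 1 (mod 3), then the configuration x : BS(1,N) → ℤ/3ℤ defined on normal forms by x(b^(−j) aᵏ bⁱ) = 2(i − j) + k (mod 3) is a well-defined proper 3-coloring of the Cayley graph of BS(1,N) with respect to {a,b}; moreover, for every g (written g = b^(−j) aᵏ bⁱ), x(gb) = x(g) + 2 and x(ga) = x(g) + 1 in ℤ/3ℤ. -/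
/-- If `N ≡ 1 (mod 3)`, the configuration defined on normal forms by
`x(b^(−j) aᵏ bⁱ) = 2(i − j) + k (mod 3)` is a well-defined proper 3-coloring of the Cayley
graph of `BS(1,N)`, and moreover `x(gb) = x(g) + 2` and `x(ga) = x(g) + 1` in `ℤ/3ℤ`. -/
theorem stmt11 (N : ℕ) (hN : 2 ≤ N) (h3 : N % 3 = 1) :
    ∃ x : BSGroup N → ZMod 3,
      (∀ (j i : ℕ) (k : ℤ), (¬ (N : ℤ) ∣ k ∨ i = 0 ∨ j = 0) →
        x ((bsb N) ^ (-(j : ℤ)) * (bsa N) ^ k * (bsb N) ^ i) =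
          2 * ((i : ZMod 3) - (j : ZMod 3)) + (k : ZMod 3)) ∧
      (∀ g : BSGroup N, x (g * bsb N) = x g + 2) ∧
      (∀ g : BSGroup N, x (g * bsa N) = x g + 1) ∧
      ∀ g : BSGroup N, x (g * bsa N) ≠ x g ∧ x (g * bsb N) ≠ x g := by
  have hNZ : (N : ZMod 3) = 1 := by
    rw [← ZMod.natCast_mod N 3, h3, Nat.cast_one]
  set f : Bool → Multiplicative (ZMod 3) :=
    fun c => Multiplicative.ofAdd (if c then 2 else 1) with hf
  have hclosed : ∀ r ∈ ({FreeGroup.of true * FreeGroup.of false * (FreeGroup.of true)⁻¹ *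
      ((FreeGroup.of false) ^ N)⁻¹} : Set (FreeGroup Bool)), FreeGroup.lift f r = 1 := by
    intro r hr
    simp only [Set.mem_singleton_iff] at hr
    subst hr
    simp only [map_mul, map_inv, map_pow, FreeGroup.lift_apply_of, hf]
    simp only [Bool.false_eq_true, if_true, if_false]
    refine Multiplicative.toAdd.injective ?_
    simp only [toAdd_mul, toAdd_inv, toAdd_pow, toAdd_ofAdd, toAdd_one, nsmul_eq_mul]
    rw [hNZ]
    ring
  set φ : BSGroup N →* Multiplicative (ZMod 3) := PresentedGroup.toGroup hclosed with hφ
  refine ⟨fun g => Multiplicative.toAdd (φ g), ?_, ?_, ?_, ?_⟩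
  · intro j i k _
    simp only [map_mul, map_zpow, map_pow, hφ]
    rw [show bsa N = PresentedGroup.of false from rfl,
      show bsb N = PresentedGroup.of true from rfl,
      PresentedGroup.toGroup.of, PresentedGroup.toGroup.of]
    simp only [hf, Bool.false_eq_true, if_true, if_false, toAdd_mul, toAdd_zpow, toAdd_pow,
      toAdd_ofAdd, zsmul_eq_mul, nsmul_eq_mul]
    push_cast
    ring
  · intro g
    simp only [map_mul, hφ, show bsb N = PresentedGroup.of true from rfl,
      PresentedGroup.toGroup.of, hf, if_true, toAdd_mul, toAdd_ofAdd]
  · intro g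
    simp only [map_mul, hφ, show bsa N = PresentedGroup.of false from rfl,
      PresentedGroup.toGroup.of, hf, Bool.false_eq_true, if_false, toAdd_mul, toAdd_ofAdd]
  · intro g
    constructor
    · simp only [map_mul, hφ, show bsa N = PresentedGroup.of false from rfl,
        PresentedGroup.toGroup.of, hf, Bool.false_eq_true, if_false, toAdd_mul, toAdd_ofAdd]
      intro h
      have : (1 : ZMod 3) = 0 := by
        have := add_left_cancel (a := Multiplicative.toAdd (φ g))
          (b := (1 : ZMod 3)) (c := 0) (by rw [add_zero]; exact h)
        simpa using this
      exact one_ne_zero this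
    · simp only [map_mul, hφ, show bsb N = PresentedGroup.of true from rfl,
        PresentedGroup.toGroup.of, hf, if_true, toAdd_mul, toAdd_ofAdd]
      intro h
      have : (2 : ZMod 3) = 0 := by
        have := add_left_cancel (a := Multiplicative.toAdd (φ g))
          (b := (2 : ZMod 3)) (c := 0) (by rw [add_zero]; exact h)
        simpa using this
      exact (by decide : (2 : ZMod 3) ≠ 0) this
end

section
/- In a graph Γ of maximum degree Δ and edge-isoperimetric constant i_e(Γ) = inf over finite nonempty F of |E(F, Γ∖F)|/|F|, for every n > Δ/2 + i_e(Γ)/2 + 1 there are no frozen proper n-colorings of Γ: every proper n-coloring can be modified on some nonempty finite set to yield a different proper n-coloring. -/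
section FrozenAux

variable {V : Type*} (Γ : SimpleGraph V) {n : ℕ} (x : V → Fin n)

/-- The Kempe relation for colors `a`, `b`: adjacency with colors `{a,b}`. -/
def kempeRel (a b : Fin n) : V → V → Prop :=
  fun u w => Γ.Adj u w ∧ ((x u = a ∧ x w = b) ∨ (x u = b ∧ x w = a))

/-- The Kempe component of `v` for colors `a`, `b`. -/
def kempeSet (a b : Fin n) (v : V) : Set V :=
  {w | Relation.ReflTransGen (kempeRel Γ x a b) v w}

/-- Internal ordered adjacent pairs of `F`. -/
def EinF [DecidableEq V] [Γ.LocallyFinite] (F : Finset V) : Finset (V × V) :=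
  F.biUnion fun v => ((Γ.neighborFinset v).filter (· ∈ F)).image (fun w => (v, w))

/-- Boundary ordered adjacent pairs of `F`. -/
def EbdF [DecidableEq V] [Γ.LocallyFinite] (F : Finset V) : Finset (V × V) :=
  F.biUnion fun v => ((Γ.neighborFinset v).filter (· ∉ F)).image (fun w => (v, w))

variable [Γ.LocallyFinite]

lemma mem_EinF [DecidableEq V] {F : Finset V} {u w : V} :
    (u, w) ∈ EinF Γ F ↔ u ∈ F ∧ w ∈ F ∧ Γ.Adj u w := by
  simp only [EinF, Finset.mem_biUnion, Finset.mem_image, Finset.mem_filter,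
    SimpleGraph.mem_neighborFinset]
  constructor
  · rintro ⟨v, hv, w', ⟨hadj, hw'⟩, h⟩
    obtain ⟨rfl, rfl⟩ := Prod.mk.injEq .. ▸ h
    exact ⟨hv, hw', hadj⟩
  · rintro ⟨hu, hw, hadj⟩
    exact ⟨u, hu, w, ⟨hadj, hw⟩, rfl⟩

lemma mem_EbdF [DecidableEq V] {F : Finset V} {u w : V} :
    (u, w) ∈ EbdF Γ F ↔ u ∈ F ∧ w ∉ F ∧ Γ.Adj u w := by
  simp only [EbdF, Finset.mem_biUnion, Finset.mem_image, Finset.mem_filter,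
    SimpleGraph.mem_neighborFinset]
  constructor
  · rintro ⟨v, hv, w', ⟨hadj, hw'⟩, h⟩
    obtain ⟨rfl, rfl⟩ := Prod.mk.injEq .. ▸ h
    exact ⟨hv, hw', hadj⟩
  · rintro ⟨hu, hw, hadj⟩
    exact ⟨u, hu, w, ⟨hadj, hw⟩, rfl⟩

lemma EinF_card_add_EbdF_card [DecidableEq V] (F : Finset V) :
    (EinF Γ F).card + (EbdF Γ F).card = ∑ v ∈ F, Γ.degree v := by
  have hdisj : ∀ (p : V → Prop) [DecidablePred p], (F : Set V).PairwiseDisjoint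
      (fun v => ((Γ.neighborFinset v).filter p).image (fun w => (v, w))) := by
    intro p _ u _ v _ huv
    simp only [Function.onFun, Finset.disjoint_left]
    rintro ⟨a, b⟩ ha hb
    simp only [Finset.mem_image] at ha hb
    obtain ⟨w, -, hw⟩ := ha
    obtain ⟨w', -, hw'⟩ := hb
    apply huv
    injection hw with h1 h2
    injection hw' with h3 h4
    exact h1.trans h3.symm
  rw [EinF, EbdF, Finset.card_biUnion (fun u hu v hv huv => hdisj _ hu hv huv),
    Finset.card_biUnion (fun u hu v hv huv => hdisj _ hu hv huv)]
  rw [← Finset.sum_add_distrib]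
  refine Finset.sum_congr rfl fun v _ => ?_
  rw [Finset.card_image_of_injective _ (fun a b h => by injection h),
    Finset.card_image_of_injective _ (fun a b h => by injection h),
    Finset.card_filter_add_card_filter_not, SimpleGraph.degree]

/-- The auxiliary "pair" graph on `F × colors`. -/
def GP (F : Finset V) : SimpleGraph {q : (↥F) × Fin n // q.2 ≠ x q.1.1} where
  Adj p q := Γ.Adj p.1.1.1 q.1.1.1 ∧ x q.1.1.1 = p.1.2 ∧ x p.1.1.1 = q.1.2
  symm := ⟨by rintro p q ⟨h1, h2, h3⟩; exact ⟨h1.symm, h3, h2⟩⟩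
  loopless := ⟨by rintro p ⟨h1, -⟩; exact h1.ne rfl⟩

/-- Kempe swap: if some Kempe component is finite, the coloring is not frozen. -/
lemma kempe_swap (hx : ∀ u v : V, Γ.Adj u v → x u ≠ x v)
    (v : V) (b : Fin n) (hb : b ≠ x v)
    (hfin : (kempeSet Γ x (x v) b v).Finite) :
    ∃ y : V → Fin n, (∀ u v : V, Γ.Adj u v → y u ≠ y v) ∧ y ≠ x ∧
      {v : V | y v ≠ x v}.Finite := by
  classical
  set a := x v with ha
  set K := kempeSet Γ x a b v with hKdef
  have hab : b ≠ a := hb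
  have hvK : v ∈ K := Relation.ReflTransGen.refl
  have hcol : ∀ w ∈ K, x w = a ∨ x w = b := by
    intro w hw
    induction hw with
    | refl => exact Or.inl rfl
    | tail _ h _ =>
      rcases h.2 with ⟨-, h2⟩ | ⟨-, h2⟩
      · exact Or.inr h2
      · exact Or.inl h2
  have hclosed : ∀ u w, u ∈ K → Γ.Adj u w →
      ((x u = a ∧ x w = b) ∨ (x u = b ∧ x w = a)) → w ∈ K :=
    fun u w hu hadj hp => Relation.ReflTransGen.tail hu ⟨hadj, hp⟩
  set y : V → Fin n := fun w => if w ∈ K then (if x w = a then b else a) else x w with hy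
  have hyK : ∀ w ∈ K, y w = if x w = a then b else a := fun w hw => if_pos hw
  have hyN : ∀ w, w ∉ K → y w = x w := fun w hw => if_neg hw
  have key : ∀ u w, Γ.Adj u w → u ∈ K → y u ≠ y w := by
    intro u w hadj hu
    by_cases hw : w ∈ K
    · rw [hyK u hu, hyK w hw]
      have hne := hx u w hadj
      rcases hcol u hu with h1 | h1 <;> rcases hcol w hw with h2 | h2
      · exact absurd (h1.trans h2.symm) hne
      · simp [h1, h2, hab]
      · simp [h1, h2, hab, Ne.symm hab]
      · exact absurd (h1.trans h2.symm) hne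
    · rw [hyK u hu, hyN w hw]
      rcases hcol u hu with h1 | h1
      · rw [if_pos h1]
        intro hc
        exact hw (hclosed u w hu hadj (Or.inl ⟨h1, hc.symm⟩))
      · rw [if_neg (h1 ▸ hab)]
        intro hc
        exact hw (hclosed u w hu hadj (Or.inr ⟨h1, hc.symm⟩))
  refine ⟨y, ?_, ?_, ?_⟩
  · intro u w hadj
    by_cases hu : u ∈ K
    · exact key u w hadj hu
    · by_cases hw : w ∈ K
      · exact (key w u hadj.symm hw).symm
      · rw [hyN u hu, hyN w hw]; exact hx u w hadj
  · intro h
    have := congrFun h v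
    rw [hyK v hvK, if_pos rfl] at this
    exact hb this
  · refine hfin.subset fun w hw => ?_
    by_contra hwK
    exact hw (hyN w hwK)

/-- The counting argument: if all Kempe components are infinite, then for any finite `F`,
`2(n-1)|F| ≤ eIn(F) + 2 e∂(F)`. -/
lemma kempe_counting [DecidableEq V] (hx : ∀ u v : V, Γ.Adj u v → x u ≠ x v)
    (hinf : ∀ (v : V) (b : Fin n), b ≠ x v → (kempeSet Γ x (x v) b v).Infinite)
    (F : Finset V) :
    2 * (F.card * n - F.card) ≤ (EinF Γ F).card + 2 * (EbdF Γ F).card := by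
  classical
  set G := GP Γ x F with hG
  -- extensionality for vertices of G
  have pt_ext : ∀ p q : {q : (↥F) × Fin n // q.2 ≠ x q.1.1},
      (p.1.1.1 : V) = q.1.1.1 → p.1.2 = q.1.2 → p = q := by
    intro p q h1 h2
    exact Subtype.ext (Prod.ext (Subtype.ext h1) h2)
  -- cardinality of the vertex set
  have hcardP : Fintype.card {q : (↥F) × Fin n // q.2 ≠ x q.1.1} = F.card * n - F.card := by
    have h1 : Fintype.card {q : (↥F) × Fin n // q.2 = x q.1.1} = F.card := by
      rw [← Fintype.card_coe F]
      exact Fintype.card_congr ⟨fun q => q.1.1, fun v => ⟨(v, x v), rfl⟩,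
        fun q => Subtype.ext (Prod.ext rfl q.2.symm), fun v => rfl⟩
    have h2 := Fintype.card_subtype_compl (fun q : (↥F) × Fin n => q.2 = x q.1.1)
    simp only [Fintype.card_prod, Fintype.card_coe, Fintype.card_fin, h1] at h2
    exact h2
  -- the representative of a component
  set rep : {q : (↥F) × Fin n // q.2 ≠ x q.1.1} → {q : (↥F) × Fin n // q.2 ≠ x q.1.1} :=
    fun p => Quot.out (G.connectedComponentMk p) with hrepdef
  have hrep_mk : ∀ p, G.connectedComponentMk (rep p) = G.connectedComponentMk p :=
    fun p => Quot.out_eq _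
  have hreach : ∀ p, G.Reachable p (rep p) :=
    fun p => (SimpleGraph.ConnectedComponent.exact (hrep_mk p)).symm
  have hrep_adj : ∀ p q, G.Adj p q → rep p = rep q := by
    intro p q h
    simp only [hrepdef]
    rw [SimpleGraph.ConnectedComponent.sound h.reachable]
  -- descent step
  have hstep0 : ∀ (p r : {q : (↥F) × Fin n // q.2 ≠ x q.1.1}), G.Reachable p r → p ≠ r →
      ∃ q, G.Adj p q ∧ G.dist q r < G.dist p r := by
    intro p r hre hp
    have hpos : 0 < G.dist p r := hre.pos_dist_of_ne hp
    obtain ⟨w, hw⟩ := hre.exists_walk_length_eq_dist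
    cases w with
    | nil => rw [← hw] at hpos; simp at hpos
    | cons hadj w' =>
      refine ⟨_, hadj, ?_⟩
      have h1 := SimpleGraph.dist_le w'
      simp only [SimpleGraph.Walk.length_cons] at hw
      omega
  have hstep : ∀ p, p ≠ rep p → ∃ q, G.Adj p q ∧ G.dist q (rep p) < G.dist p (rep p) :=
    fun p hp => hstep0 p (rep p) (hreach p) hp
  set next : {q : (↥F) × Fin n // q.2 ≠ x q.1.1} → {q : (↥F) × Fin n // q.2 ≠ x q.1.1} :=
    fun p => if h : p ≠ rep p then (hstep p h).choose else p with hnextdef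
  have hnext : ∀ p, p ≠ rep p →
      G.Adj p (next p) ∧ G.dist (next p) (rep p) < G.dist p (rep p) := by
    intro p h
    simp only [hnextdef, dif_pos h]
    exact (hstep p h).choose_spec
  -- the two injections into internal edges
  set NR := Finset.univ.filter
    (fun p : {q : (↥F) × Fin n // q.2 ≠ x q.1.1} => ¬ p = rep p) with hNRdef
  set R := Finset.univ.filter
    (fun p : {q : (↥F) × Fin n // q.2 ≠ x q.1.1} => p = rep p) with hRdef
  have hsplit : R.card + NR.card = F.card * n - F.card := by
    rw [hRdef, hNRdef, Finset.card_filter_add_card_filter_not, Finset.card_univ, hcardP]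
  have hNRmem : ∀ p ∈ NR, p ≠ rep p := by
    intro p hp
    simpa [hNRdef] using hp
  set φ1 : {q : (↥F) × Fin n // q.2 ≠ x q.1.1} → V × V :=
    fun p => (p.1.1.1, (next p).1.1.1) with hφ1
  set φ2 : {q : (↥F) × Fin n // q.2 ≠ x q.1.1} → V × V :=
    fun p => ((next p).1.1.1, p.1.1.1) with hφ2
  have hinj1 : Set.InjOn φ1 NR := by
    intro p hp q hq h
    have hp' := hNRmem p hp
    have hq' := hNRmem q hq
    injection h with h1 h2
    refine pt_ext _ _ h1 ?_
    have e1 : x ((next p).1.1.1) = p.1.2 := (hnext p hp').1.2.1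
    have e2 : x ((next q).1.1.1) = q.1.2 := (hnext q hq').1.2.1
    rw [← e1, ← e2, h2]
  have hinj2 : Set.InjOn φ2 NR := by
    intro p hp q hq h
    have hp' := hNRmem p hp
    have hq' := hNRmem q hq
    injection h with h1 h2
    refine pt_ext _ _ h2 ?_
    have e1 : x ((next p).1.1.1) = p.1.2 := (hnext p hp').1.2.1
    have e2 : x ((next q).1.1.1) = q.1.2 := (hnext q hq').1.2.1
    rw [← e1, ← e2, h1]
  have hdisj : ∀ p ∈ NR, ∀ q ∈ NR, φ1 p ≠ φ2 q := by
    intro p hp q hq h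
    have hp' := hNRmem p hp
    have hq' := hNRmem q hq
    injection h with h1 h2
    -- h1 : p.v = (next q).v, h2 : (next p).v = q.v
    have hpq : p = next q := by
      refine pt_ext _ _ h1 ?_
      have e1 : x ((next p).1.1.1) = p.1.2 := (hnext p hp').1.2.1
      have e2 : x (q.1.1.1) = (next q).1.2 := (hnext q hq').1.2.2
      rw [← e2, ← e1, h2]
    have hqp : q = next p := by
      refine pt_ext _ _ h2.symm ?_
      have e1 : x ((next q).1.1.1) = q.1.2 := (hnext q hq').1.2.1
      have e2 : x (p.1.1.1) = (next p).1.2 := (hnext p hp').1.2.2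
      rw [← e2, ← e1, h1]
    have hrepeq : rep p = rep q := hrep_adj p q (hqp ▸ (hnext p hp').1)
    have d1 := (hnext p hp').2
    have d2 := (hnext q hq').2
    rw [← hqp] at d1
    rw [← hpq, ← hrepeq] at d2
    omega
  have hsub : (NR.image φ1) ∪ (NR.image φ2) ⊆ EinF Γ F := by
    intro e he
    have : (∃ p ∈ NR, φ1 p = e) ∨ ∃ p ∈ NR, φ2 p = e := by
      rcases Finset.mem_union.mp he with he | he
      · exact Or.inl (Finset.mem_image.mp he)
      · exact Or.inr (Finset.mem_image.mp he)
    obtain ⟨p, hp, rfl⟩ | ⟨p, hp, rfl⟩ := this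
    · have hp' := hNRmem p hp
      have hadj : Γ.Adj p.1.1.1 ((next p).1.1.1) := (hnext p hp').1.1
      exact mem_EinF Γ |>.mpr ⟨p.1.1.2, (next p).1.1.2, hadj⟩
    · have hp' := hNRmem p hp
      have hadj : Γ.Adj p.1.1.1 ((next p).1.1.1) := (hnext p hp').1.1
      exact mem_EinF Γ |>.mpr ⟨(next p).1.1.2, p.1.1.2, hadj.symm⟩
  have hdisj' : Disjoint (NR.image φ1) (NR.image φ2) := by
    rw [Finset.disjoint_left]
    rintro e he1 he2
    obtain ⟨p, hp, rfl⟩ := Finset.mem_image.mp he1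
    obtain ⟨q, hq, hqe⟩ := Finset.mem_image.mp he2
    exact hdisj p hp q hq hqe.symm
  have hcard1 : 2 * NR.card ≤ (EinF Γ F).card := by
    have e1 : (NR.image φ1).card = NR.card := Finset.card_image_of_injOn hinj1
    have e2 : (NR.image φ2).card = NR.card := Finset.card_image_of_injOn hinj2
    have := Finset.card_le_card hsub
    rw [Finset.card_union_of_disjoint hdisj', e1, e2] at this
    omega
  -- escape from every component
  have hoc : ∀ (v0 : V) (a0 b0 : Fin n), a0 = x v0 → b0 ≠ x v0 →
      ∀ w : V, (if x w = a0 then b0 else a0) ≠ x w := by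
    intro v0 a0 b0 ha0 hb0 w
    by_cases h : x w = a0
    · rw [if_pos h, h, ha0]; exact hb0
    · rw [if_neg h]; exact fun hc => h hc.symm
  have hescape : ∀ p : {q : (↥F) × Fin n // q.2 ≠ x q.1.1},
      ∃ q w, G.Reachable p q ∧ w ∉ F ∧ Γ.Adj q.1.1.1 w ∧ x w = q.1.2 := by
    rintro ⟨⟨⟨v0, hv0⟩, b0⟩, hb0⟩
    have hb0' : b0 ≠ x v0 := hb0
    have hKinf := hinf v0 b0 hb0'
    obtain ⟨w1, hw1K, hw1F⟩ := hKinf.exists_notMem_finset F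
    have hmain : ∀ w, Relation.ReflTransGen (kempeRel Γ x (x v0) b0) v0 w →
        (∃ q w', G.Reachable ⟨(⟨v0, hv0⟩, b0), hb0⟩ q ∧ w' ∉ F ∧ Γ.Adj q.1.1.1 w' ∧
          x w' = q.1.2) ∨
        (∃ (hw : w ∈ F), G.Reachable ⟨(⟨v0, hv0⟩, b0), hb0⟩
          ⟨(⟨w, hw⟩, if x w = x v0 then b0 else x v0), hoc v0 (x v0) b0 rfl hb0' w⟩) := by
      intro w hw
      induction hw with
      | refl =>
        right
        refine ⟨hv0, ?_⟩
        have he : (⟨(⟨v0, hv0⟩, if x v0 = x v0 then b0 else x v0),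
            hoc v0 (x v0) b0 rfl hb0' v0⟩ :
            {q : (↥F) × Fin n // q.2 ≠ x q.1.1}) = ⟨(⟨v0, hv0⟩, b0), hb0⟩ :=
          pt_ext _ _ rfl (if_pos rfl)
        rw [he]
      | @tail w' w hsteps hstep1 ih =>
        rcases ih with hesc | ⟨hwF', hreach'⟩
        · exact Or.inl hesc
        · obtain ⟨hadj, hcase⟩ := hstep1
          by_cases hwF : w ∈ F
          · right
            refine ⟨hwF, hreach'.trans (SimpleGraph.Adj.reachable ?_)⟩
            rcases hcase with ⟨h1, h2⟩ | ⟨h1, h2⟩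
            · -- x w' = x v0, x w = b0
              refine ⟨hadj, ?_, ?_⟩
              · show x w = if x w' = x v0 then b0 else x v0
                rw [if_pos h1]; exact h2
              · have hne : ¬ (x w = x v0) := by rw [h2]; exact hb0'
                show x w' = if x w = x v0 then b0 else x v0
                rw [if_neg hne]; exact h1
            · -- x w' = b0, x w = x v0
              have hne' : ¬ (x w' = x v0) := by rw [h1]; exact hb0'
              refine ⟨hadj, ?_, ?_⟩
              · show x w = if x w' = x v0 then b0 else x v0
                rw [if_neg hne']; exact h2
              · show x w' = if x w = x v0 then b0 else x v0
                rw [if_pos h2]; exact h1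
          · left
            refine ⟨⟨(⟨w', hwF'⟩, if x w' = x v0 then b0 else x v0),
              hoc v0 (x v0) b0 rfl hb0' w'⟩, w, hreach', hwF, hadj, ?_⟩
            rcases hcase with ⟨h1, h2⟩ | ⟨h1, h2⟩
            · show x w = if x w' = x v0 then b0 else x v0
              rw [if_pos h1]; exact h2
            · have hne' : ¬ (x w' = x v0) := by rw [h1]; exact hb0'
              show x w = if x w' = x v0 then b0 else x v0
              rw [if_neg hne']; exact h2
    rcases hmain w1 hw1K with hesc | ⟨hwF, -⟩
    · exact hesc
    · exact absurd hwF hw1F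
  have hescC : ∀ c : G.ConnectedComponent,
      ∃ q w, G.connectedComponentMk q = c ∧ w ∉ F ∧ Γ.Adj q.1.1.1 w ∧ x w = q.1.2 := by
    intro c
    obtain ⟨q, w, hre, h1, h2, h3⟩ := hescape (Quot.out c)
    refine ⟨q, w, ?_, h1, h2, h3⟩
    have e1 : G.connectedComponentMk q = G.connectedComponentMk (Quot.out c) :=
      SimpleGraph.ConnectedComponent.sound hre.symm
    rw [e1]
    exact Quot.out_eq c
  set escq : G.ConnectedComponent → {q : (↥F) × Fin n // q.2 ≠ x q.1.1} :=
    fun c => (hescC c).choose with hescqdef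
  set escw : G.ConnectedComponent → V := fun c => (hescC c).choose_spec.choose with hescwdef
  have hesc_spec : ∀ c, G.connectedComponentMk (escq c) = c ∧ escw c ∉ F ∧
      Γ.Adj (escq c).1.1.1 (escw c) ∧ x (escw c) = (escq c).1.2 :=
    fun c => (hescC c).choose_spec.choose_spec
  set ψ : {q : (↥F) × Fin n // q.2 ≠ x q.1.1} → V × V :=
    fun p => ((escq (G.connectedComponentMk p)).1.1.1, escw (G.connectedComponentMk p)) with hψdef
  have hcard2 : R.card ≤ (EbdF Γ F).card := by
    refine Finset.card_le_card_of_injOn ψ ?_ ?_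
    · intro p _
      obtain ⟨-, h2, h3, -⟩ := hesc_spec (G.connectedComponentMk p)
      exact mem_EbdF Γ |>.mpr ⟨(escq (G.connectedComponentMk p)).1.1.2, h2, h3⟩
    · intro p hp q hq h
      have hp' : p = rep p := by simpa [hRdef] using hp
      have hq' : q = rep q := by simpa [hRdef] using hq
      injection h with h1 h2
      have hqq : escq (G.connectedComponentMk p) = escq (G.connectedComponentMk q) := by
        refine pt_ext _ _ h1 ?_
        rw [← (hesc_spec (G.connectedComponentMk p)).2.2.2,
          ← (hesc_spec (G.connectedComponentMk q)).2.2.2, h2]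
      have hcc : G.connectedComponentMk p = G.connectedComponentMk q := by
        rw [← (hesc_spec (G.connectedComponentMk p)).1,
          ← (hesc_spec (G.connectedComponentMk q)).1, hqq]
      rw [hp', hq', hrepdef]
      simp only []
      rw [hcc]
  omega

end FrozenAux

/-- In a locally finite infinite graph `Γ` with maximum degree `Δ` and edge-isoperimetric
constant `i_e(Γ) = inf_F |E(F, Γ∖F)|/|F|` (inf over finite nonempty `F`), for every
`n > Δ/2 + i_e(Γ)/2 + 1` there are no frozen proper `n`-colorings: every proper `n`-coloring
can be modified on a finite set to yield a different proper `n`-coloring. -/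
theorem stmt15 {V : Type*} [Infinite V] (Γ : SimpleGraph V) [Γ.LocallyFinite]
    (Δ : ℕ) (hΔ : ∀ v : V, Γ.degree v ≤ Δ)
    (n : ℕ)
    (hn : (Δ : ℝ) / 2 +
        (sInf {r : ℝ | ∃ F : Finset V, F.Nonempty ∧
          r = (Set.ncard {p : V × V | p.1 ∈ F ∧ p.2 ∉ F ∧ Γ.Adj p.1 p.2} : ℝ) / F.card}) / 2
        + 1 < n)
    (x : V → Fin n) (hx : ∀ u v : V, Γ.Adj u v → x u ≠ x v) :
    ∃ y : V → Fin n, (∀ u v : V, Γ.Adj u v → y u ≠ y v) ∧ y ≠ x ∧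
      {v : V | y v ≠ x v}.Finite := by
  classical
  by_cases hK : ∃ (v : V) (b : Fin n), b ≠ x v ∧ (kempeSet Γ x (x v) b v).Finite
  · obtain ⟨v, b, hb, hfin⟩ := hK
    exact kempe_swap Γ x hx v b hb hfin
  · exfalso
    push_neg at hK
    have hinf : ∀ (v : V) (b : Fin n), b ≠ x v → (kempeSet Γ x (x v) b v).Infinite := by
      intro v b hb
      exact hK v b hb
    -- the set of isoperimetric ratios
    set S : Set ℝ := {r : ℝ | ∃ F : Finset V, F.Nonempty ∧
        r = (Set.ncard {p : V × V | p.1 ∈ F ∧ p.2 ∉ F ∧ Γ.Adj p.1 p.2} : ℝ) / F.card} with hS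
    have hSne : S.Nonempty := by
      obtain ⟨v⟩ := (inferInstance : Nonempty V)
      exact ⟨_, ⟨{v}, Finset.singleton_nonempty v, rfl⟩⟩
    have hS0 : ∀ r ∈ S, (0 : ℝ) ≤ r := by
      rintro r ⟨F, hF, rfl⟩
      positivity
    have hInf0 : (0 : ℝ) ≤ sInf S := Real.sInf_nonneg hS0
    have hn1 : (1 : ℝ) < n := by
      have h0 : (0 : ℝ) ≤ (Δ : ℝ) / 2 := by positivity
      linarith
    have hn1' : 1 ≤ n := by exact_mod_cast hn1.le
    have hlt : sInf S < 2 * n - 2 - Δ := by linarith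
    obtain ⟨r, hrS, hrlt⟩ := exists_lt_of_csInf_lt hSne hlt
    obtain ⟨F, hFne, rfl⟩ := hrS
    -- identify the boundary set with the finset
    have hsetEq : {p : V × V | p.1 ∈ F ∧ p.2 ∉ F ∧ Γ.Adj p.1 p.2} = ↑(EbdF Γ F) := by
      ext ⟨u, w⟩
      simp only [Set.mem_setOf_eq, Finset.coe_mem, Finset.mem_coe, mem_EbdF]
    have hncard : Set.ncard {p : V × V | p.1 ∈ F ∧ p.2 ∉ F ∧ Γ.Adj p.1 p.2}
        = (EbdF Γ F).card := by rw [hsetEq, Set.ncard_coe_finset]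
    have hFpos : (0 : ℝ) < F.card := by exact_mod_cast Finset.card_pos.mpr hFne
    have hBlt : ((EbdF Γ F).card : ℝ) < (2 * n - 2 - Δ) * F.card := by
      rw [hncard] at hrlt
      calc ((EbdF Γ F).card : ℝ) = ((EbdF Γ F).card : ℝ) / F.card * F.card := by
            field_simp
        _ < (2 * n - 2 - Δ) * F.card := by
            exact mul_lt_mul_of_pos_right hrlt hFpos
    have hcount := kempe_counting Γ x hx hinf F
    have hdeg : (EinF Γ F).card + (EbdF Γ F).card ≤ Δ * F.card := by
      rw [EinF_card_add_EbdF_card]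
      calc ∑ v ∈ F, Γ.degree v ≤ ∑ _v ∈ F, Δ := Finset.sum_le_sum fun v _ => hΔ v
        _ = Δ * F.card := by rw [Finset.sum_const, smul_eq_mul, mul_comm]
    -- now derive the contradiction in ℝ
    have hsub : ((F.card * n - F.card : ℕ) : ℝ) = (F.card : ℝ) * n - F.card := by
      have : F.card ≤ F.card * n := Nat.le_mul_of_pos_right _ (by omega)
      push_cast [Nat.cast_sub this]
      ring
    have hcount' : (2 : ℝ) * ((F.card : ℝ) * n - F.card)
        ≤ ((EinF Γ F).card : ℝ) + 2 * (EbdF Γ F).card := by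
      have := (Nat.cast_le (α := ℝ)).mpr hcount
      push_cast at this
      rw [hsub] at this
      linarith
    have hdeg' : ((EinF Γ F).card : ℝ) + (EbdF Γ F).card ≤ (Δ : ℝ) * F.card := by
      exact_mod_cast hdeg
    linarith
end

section
/- The edge-isoperimetric constant of the Cayley graph of BS(1,N) (N ≥ 2) with respect to {a,b} is zero: inf over finite nonempty F of |E(F, Γ∖F)|/|F| equals 0; indeed |E(R_m, Γ∖R_m)|/|R_m| = 2(N^{m+1} − 1)/((N−1)·m·Nᵐ) → 0 as m → ∞. -/
/-- Edge boundary count, as in the previous statement. -/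
noncomputable def bsBoundary (N : ℕ) (F : Set (BSGroup N)) : ℕ :=
  Set.ncard {p : BSGroup N × BSGroup N | p.1 ∈ F ∧ p.2 ∉ F ∧
    (p.2 = p.1 * bsa N ∨ p.2 = p.1 * bsb N ∨ p.1 = p.2 * bsa N ∨ p.1 = p.2 * bsb N)}

/-- Affine group `x ↦ u·x + t` over `ℚ`, used as a faithful-enough target for `BS(1,N)`. -/
@[ext]
structure Aff where
  u : ℚˣ
  t : ℚ

namespace Aff

instance : Group Aff where
  mul p q := ⟨p.u * q.u, p.t + (p.u : ℚ) * q.t⟩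
  one := ⟨1, 0⟩
  inv p := ⟨p.u⁻¹, -(((p.u⁻¹ : ℚˣ) : ℚ) * p.t)⟩
  mul_assoc a b c := by
    refine Aff.ext (mul_assoc _ _ _) ?_
    show a.t + (a.u : ℚ) * b.t + ((a.u * b.u : ℚˣ) : ℚ) * c.t
        = a.t + (a.u : ℚ) * (b.t + (b.u : ℚ) * c.t)
    push_cast; ring
  one_mul p := by refine Aff.ext (one_mul _) ?_; show (0 : ℚ) + ((1 : ℚˣ) : ℚ) * p.t = p.t; simp
  mul_one p := by refine Aff.ext (mul_one _) ?_; show p.t + (p.u : ℚ) * 0 = p.t; simp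
  inv_mul_cancel p := by
    refine Aff.ext (inv_mul_cancel _) ?_
    show -(((p.u⁻¹ : ℚˣ) : ℚ) * p.t) + ((p.u⁻¹ : ℚˣ) : ℚ) * p.t = 0
    ring

@[simp] lemma mul_u (p q : Aff) : (p * q).u = p.u * q.u := rfl
@[simp] lemma mul_t (p q : Aff) : (p * q).t = p.t + (p.u : ℚ) * q.t := rfl
@[simp] lemma one_u : (1 : Aff).u = 1 := rfl
@[simp] lemma one_t : (1 : Aff).t = 0 := rfl
@[simp] lemma inv_u (p : Aff) : p⁻¹.u = p.u⁻¹ := rfl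
@[simp] lemma inv_t (p : Aff) : p⁻¹.t = -(((p.u⁻¹ : ℚˣ) : ℚ) * p.t) := rfl

end Aff

section BS

variable (N : ℕ)

/-- Image of the generator `a`: translation by 1. -/
def afA : Aff := ⟨1, 1⟩

lemma rat_cast_ne (hN : 2 ≤ N) : ((N : ℚ)) ≠ 0 := by
  exact_mod_cast (by omega : N ≠ 0)

/-- Image of the generator `b`: scaling by `N`. -/
def afB (N : ℕ) (hN : 2 ≤ N) : Aff := ⟨Units.mk0 (N : ℚ) (rat_cast_ne N hN), 0⟩

lemma afA_pow (k : ℕ) : (afA) ^ k = ⟨1, (k : ℚ)⟩ := by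
  induction k with
  | zero => refine Aff.ext (by simp) (by simp)
  | succ n ih =>
    rw [pow_succ, ih]
    refine Aff.ext (by simp [afA]) (by push_cast; simp [afA])

lemma afB_pow (hN : 2 ≤ N) (i : ℕ) : (afB N hN) ^ i = ⟨(Units.mk0 (N : ℚ) (rat_cast_ne N hN)) ^ i, 0⟩ := by
  induction i with
  | zero => refine Aff.ext (by simp) (by simp)
  | succ n ih =>
    rw [pow_succ, ih]
    exact Aff.ext (by simp [afB, pow_succ]) (by simp [afB])

lemma af_rel (hN : 2 ≤ N) : afB N hN * afA * (afB N hN)⁻¹ = afA ^ N := by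
  rw [afA_pow]
  refine Aff.ext ?_ ?_
  · simp [afA, afB]
  · simp [afA, afB]

/-- The homomorphism `BS(1,N) → Aff(ℚ)` sending `a` to `x+1` and `b` to `Nx`. -/
def bsπ (hN : 2 ≤ N) : BSGroup N →* Aff :=
  PresentedGroup.toGroup (f := fun x => cond x (afB N hN) afA) (by
    intro r hr
    rw [Set.mem_singleton_iff] at hr
    subst hr
    simp only [map_mul, map_inv, map_pow, FreeGroup.lift_apply_of]
    simp only [Bool.cond_true, Bool.cond_false]
    rw [mul_inv_eq_one, ← af_rel N hN])

@[simp] lemma bsπ_a (hN : 2 ≤ N) : bsπ N hN (bsa N) = afA := by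
  simp [bsπ, bsa, PresentedGroup.toGroup.of]

@[simp] lemma bsπ_b (hN : 2 ≤ N) : bsπ N hN (bsb N) = afB N hN := by
  simp [bsπ, bsb, PresentedGroup.toGroup.of]

/-- Parametrization of the rectangle. -/
def bse (k i : ℕ) : BSGroup N := (bsa N) ^ k * (bsb N) ^ i

lemma bsπ_e (hN : 2 ≤ N) (k i : ℕ) :
    bsπ N hN (bse N k i) = ⟨(Units.mk0 (N : ℚ) (rat_cast_ne N hN)) ^ i, (k : ℚ)⟩ := by
  rw [bse, map_mul, map_pow, map_pow, bsπ_a, bsπ_b, afA_pow, afB_pow]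
  exact Aff.ext (by simp) (by simp)

lemma bse_inj (hN : 2 ≤ N) : Function.Injective (fun p : ℕ × ℕ => bse N p.1 p.2) := by
  rintro ⟨k, i⟩ ⟨k', i'⟩ h
  simp only at h
  have h2 := congrArg (bsπ N hN) h
  rw [bsπ_e N hN, bsπ_e N hN] at h2
  have ht : (k : ℚ) = (k' : ℚ) := congrArg Aff.t h2
  have hu := congrArg Aff.u h2
  have hu' : ((N : ℚ)) ^ i = ((N : ℚ)) ^ i' := by
    have := congrArg (fun (x : ℚˣ) => (x : ℚ)) hu
    simpa using this
  have hi : i = i' := by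
    have : ((N ^ i : ℕ) : ℚ) = ((N ^ i' : ℕ) : ℚ) := by push_cast; exact hu'
    exact Nat.pow_right_injective hN (by exact_mod_cast this)
  have hk : k = k' := by exact_mod_cast ht
  simp [hi, hk]

/-- basic relation in the group -/
lemma bs_ba : bsb N * bsa N = (bsa N) ^ N * bsb N := by
  have h1 : (PresentedGroup.mk _ (FreeGroup.of true * FreeGroup.of false * (FreeGroup.of true)⁻¹ *
      ((FreeGroup.of false) ^ N)⁻¹) : BSGroup N) = 1 := by
    apply (QuotientGroup.eq_one_iff _).mpr
    exact Subgroup.subset_normalClosure (Set.mem_singleton _)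
  rw [map_mul, map_mul, map_mul, map_inv, map_inv, map_pow] at h1
  have h2 : bsb N * bsa N * (bsb N)⁻¹ * ((bsa N) ^ N)⁻¹ = 1 := h1
  have h3 : bsb N * bsa N * (bsb N)⁻¹ = (bsa N) ^ N := by
    rw [← mul_inv_eq_one]; exact h2
  calc bsb N * bsa N = (bsb N * bsa N * (bsb N)⁻¹) * bsb N := by group
    _ = (bsa N) ^ N * bsb N := by rw [h3]

lemma bs_b_apow (k : ℕ) : bsb N * (bsa N) ^ k = (bsa N) ^ (N * k) * bsb N := by
  induction k with
  | zero => simp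
  | succ n ih =>
    rw [pow_succ, ← mul_assoc, ih, mul_assoc, bs_ba, ← mul_assoc, ← pow_add]
    ring_nf

lemma bs_bpow_a (i : ℕ) : (bsb N) ^ i * bsa N = (bsa N) ^ (N ^ i) * (bsb N) ^ i := by
  induction i with
  | zero => simp
  | succ n ih =>
    rw [pow_succ', mul_assoc, ih, ← mul_assoc, bs_b_apow, mul_assoc,
      show N * N ^ n = N ^ (n + 1) from (pow_succ' N n).symm, ← pow_succ']

lemma bse_mul_a (k i : ℕ) : bse N k i * bsa N = bse N (k + N ^ i) i := by
  rw [bse, bse, mul_assoc, bs_bpow_a, ← mul_assoc, ← pow_add]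

lemma bse_mul_b (k i : ℕ) : bse N k i * bsb N = bse N k (i + 1) := by
  rw [bse, bse, mul_assoc, ← pow_succ]

/-- The rectangle as a finset image. -/
def boxF (m : ℕ) : Finset (ℕ × ℕ) := Finset.range (N ^ m) ×ˢ Finset.range m

lemma bsRect_eq (m : ℕ) :
    bsRect N m = (fun p : ℕ × ℕ => bse N p.1 p.2) '' ↑(boxF N m) := by
  ext g
  simp only [bsRect, Set.mem_setOf_eq, Set.mem_image, Finset.coe_product, boxF,
    Finset.coe_range, Set.mem_prod, Set.mem_Iio]
  constructor
  · rintro ⟨k, i, hk, hi, rfl⟩; exact ⟨(k, i), ⟨hk, hi⟩, rfl⟩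
  · rintro ⟨⟨k, i⟩, ⟨hk, hi⟩, rfl⟩; exact ⟨k, i, hk, hi, rfl⟩

lemma bsRect_finite (m : ℕ) : (bsRect N m).Finite := by
  rw [bsRect_eq]; exact (Set.toFinite _).image _

lemma bsRect_ncard (hN : 2 ≤ N) (m : ℕ) : (bsRect N m).ncard = N ^ m * m := by
  rw [bsRect_eq, Set.ncard_image_of_injOn ((bse_inj N hN).injOn),
    Set.ncard_coe_finset, boxF, Finset.card_product, Finset.card_range, Finset.card_range]

lemma geom_sum_le (hN : 2 ≤ N) (m : ℕ) : ∑ i ∈ Finset.range m, N ^ i ≤ N ^ m := by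
  induction m with
  | zero => simp
  | succ n ih =>
    rw [Finset.sum_range_succ, pow_succ]
    have : N ^ n * 2 ≤ N ^ n * N := Nat.mul_le_mul_left _ hN
    omega

end BS

section Boundary

variable {N : ℕ} (hN : 2 ≤ N) (m : ℕ)

/-- one-direction boundary set -/
def bside (N : ℕ) (s : BSGroup N) : Set (BSGroup N × BSGroup N) :=
  {p | p.1 ∈ bsRect N m ∧ p.2 ∉ bsRect N m ∧ p.2 = p.1 * s}

lemma bside_eq_image (s : BSGroup N) :
    bside m N s = (fun x => (x, x * s)) '' {x | x ∈ bsRect N m ∧ x * s ∉ bsRect N m} := by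
  ext ⟨p1, p2⟩
  simp only [bside, Set.mem_setOf_eq, Set.mem_image]
  constructor
  · rintro ⟨h1, h2, rfl⟩; exact ⟨p1, ⟨h1, h2⟩, rfl⟩
  · rintro ⟨x, ⟨h1, h2⟩, h⟩
    obtain ⟨rfl, rfl⟩ := Prod.mk.injEq .. ▸ h
    exact ⟨h1, h2, rfl⟩

lemma bside_ncard_le (s : BSGroup N) (P : Finset (ℕ × ℕ))
    (hP : {x | x ∈ bsRect N m ∧ x * s ∉ bsRect N m} ⊆
      (fun p : ℕ × ℕ => bse N p.1 p.2) '' ↑P) :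
    (bside m N s).ncard ≤ P.card := by
  rw [bside_eq_image]
  calc ((fun x => (x, x * s)) '' {x | x ∈ bsRect N m ∧ x * s ∉ bsRect N m}).ncard
      ≤ {x | x ∈ bsRect N m ∧ x * s ∉ bsRect N m}.ncard :=
        Set.ncard_image_le ((bsRect_finite N m).subset (fun x hx => hx.1))
    _ ≤ ((fun p : ℕ × ℕ => bse N p.1 p.2) '' ↑P).ncard :=
        Set.ncard_le_ncard hP ((Set.toFinite _).image _)
    _ ≤ (↑P : Set (ℕ × ℕ)).ncard := Set.ncard_image_le (Set.toFinite _)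
    _ = P.card := Set.ncard_coe_finset _

end Boundary

section Main

variable {N : ℕ}

lemma mem_bsRect_iff (hN : 2 ≤ N) (m : ℕ) (g : BSGroup N) :
    g ∈ bsRect N m ↔ ∃ k i : ℕ, k < N ^ m ∧ i < m ∧ g = bse N k i := Iff.rfl

lemma boundary_union (m : ℕ) :
    {p : BSGroup N × BSGroup N | p.1 ∈ bsRect N m ∧ p.2 ∉ bsRect N m ∧
      (p.2 = p.1 * bsa N ∨ p.2 = p.1 * bsb N ∨ p.1 = p.2 * bsa N ∨ p.1 = p.2 * bsb N)} ⊆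
    bside m N (bsa N) ∪ bside m N (bsb N) ∪ bside m N (bsa N)⁻¹ ∪ bside m N (bsb N)⁻¹ := by
  rintro ⟨p1, p2⟩ ⟨h1, h2, hr⟩
  rcases hr with h | h | h | h
  · exact Or.inl (Or.inl (Or.inl ⟨h1, h2, h⟩))
  · exact Or.inl (Or.inl (Or.inr ⟨h1, h2, h⟩))
  · exact Or.inl (Or.inr ⟨h1, h2, by rw [h]; group⟩)
  · exact Or.inr ⟨h1, h2, by rw [h]; group⟩

lemma bsBoundary_le (hN : 2 ≤ N) (m : ℕ) :
    bsBoundary N (bsRect N m) ≤ 4 * N ^ m := by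
  classical
  set e2 : ℕ × ℕ → BSGroup N := fun p => bse N p.1 p.2 with he2
  have heinj := bse_inj N hN
  -- the four parameter finsets
  set P1 : Finset (ℕ × ℕ) :=
    (Finset.range m).biUnion (fun i => (Finset.Ico (N ^ m - N ^ i) (N ^ m)).image
      (fun k => (k, i))) with hP1
  set P2 : Finset (ℕ × ℕ) := (Finset.range (N ^ m)).image (fun k => (k, m - 1)) with hP2
  set P3 : Finset (ℕ × ℕ) :=
    (Finset.range m).biUnion (fun i => (Finset.range (N ^ i)).image (fun k => (k, i))) with hP3
  set P4 : Finset (ℕ × ℕ) := (Finset.range (N ^ m)).image (fun k => (k, 0)) with hP4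
  have hPow : ∀ i, i < m → N ^ i ≤ N ^ m := fun i hi =>
    Nat.pow_le_pow_right (by omega) (le_of_lt hi)
  -- card bounds
  have hc1 : P1.card ≤ N ^ m := by
    calc P1.card ≤ ∑ i ∈ Finset.range m, ((Finset.Ico (N ^ m - N ^ i) (N ^ m)).image
          (fun k => (k, i))).card := Finset.card_biUnion_le
      _ ≤ ∑ i ∈ Finset.range m, N ^ i := by
          apply Finset.sum_le_sum
          intro i hi
          calc ((Finset.Ico (N ^ m - N ^ i) (N ^ m)).image (fun k => (k, i))).card
              ≤ (Finset.Ico (N ^ m - N ^ i) (N ^ m)).card := Finset.card_image_le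
            _ = N ^ m - (N ^ m - N ^ i) := Nat.card_Ico _ _
            _ ≤ N ^ i := by
                have := hPow i (Finset.mem_range.mp hi); omega
      _ ≤ N ^ m := geom_sum_le N hN m
  have hc3 : P3.card ≤ N ^ m := by
    calc P3.card ≤ ∑ i ∈ Finset.range m, ((Finset.range (N ^ i)).image
          (fun k => (k, i))).card := Finset.card_biUnion_le
      _ ≤ ∑ i ∈ Finset.range m, N ^ i := by
          apply Finset.sum_le_sum
          intro i _
          calc ((Finset.range (N ^ i)).image (fun k => (k, i))).card
              ≤ (Finset.range (N ^ i)).card := Finset.card_image_le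
            _ = N ^ i := Finset.card_range _
      _ ≤ N ^ m := geom_sum_le N hN m
  have hc2 : P2.card ≤ N ^ m := by
    calc P2.card ≤ (Finset.range (N ^ m)).card := Finset.card_image_le
      _ = N ^ m := Finset.card_range _
  have hc4 : P4.card ≤ N ^ m := by
    calc P4.card ≤ (Finset.range (N ^ m)).card := Finset.card_image_le
      _ = N ^ m := Finset.card_range _
  -- subset facts
  have hs1 : {x | x ∈ bsRect N m ∧ x * bsa N ∉ bsRect N m} ⊆ e2 '' ↑P1 := by
    rintro x ⟨⟨k, i, hk, hi, rfl⟩, hout⟩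
    refine ⟨(k, i), ?_, rfl⟩
    have hbig : N ^ m ≤ k + N ^ i := by
      by_contra hlt
      push_neg at hlt
      exact hout ⟨k + N ^ i, i, hlt, hi, (bse_mul_a N k i).symm ▸ rfl⟩
    simp only [hP1, Finset.coe_biUnion, Finset.mem_coe, Finset.mem_range, Set.mem_iUnion,
      Finset.coe_image, Set.mem_image, Finset.mem_coe, Finset.mem_Ico]
    exact ⟨i, hi, k, ⟨by omega, hk⟩, rfl⟩
  have hs2 : {x | x ∈ bsRect N m ∧ x * bsb N ∉ bsRect N m} ⊆ e2 '' ↑P2 := by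
    rintro x ⟨⟨k, i, hk, hi, rfl⟩, hout⟩
    have him : i + 1 = m := by
      rcases Nat.lt_or_ge (i + 1) m with h | h
      · exact absurd ⟨k, i + 1, hk, h, (bse_mul_b N k i).symm ▸ rfl⟩ hout
      · omega
    refine ⟨(k, i), ?_, rfl⟩
    simp only [hP2, Finset.coe_image, Set.mem_image, Finset.mem_coe, Finset.mem_range]
    exact ⟨k, hk, by rw [show m - 1 = i by omega]⟩
  have hs3 : {x | x ∈ bsRect N m ∧ x * (bsa N)⁻¹ ∉ bsRect N m} ⊆ e2 '' ↑P3 := by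
    rintro x ⟨⟨k, i, hk, hi, rfl⟩, hout⟩
    refine ⟨(k, i), ?_, rfl⟩
    have hsmall : k < N ^ i := by
      by_contra hge
      push_neg at hge
      apply hout
      refine ⟨k - N ^ i, i, by omega, hi, ?_⟩
      have h1 : bse N (k - N ^ i) i * bsa N = bse N k i := by
        rw [bse_mul_a, Nat.sub_add_cancel hge]
      have h2 : bse N k i * (bsa N)⁻¹ = bse N (k - N ^ i) i := by rw [← h1]; group
      exact h2
    simp only [hP3, Finset.coe_biUnion, Finset.mem_coe, Finset.mem_range, Set.mem_iUnion,
      Finset.coe_image, Set.mem_image, Finset.mem_coe]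
    exact ⟨i, hi, k, hsmall, rfl⟩
  have hs4 : {x | x ∈ bsRect N m ∧ x * (bsb N)⁻¹ ∉ bsRect N m} ⊆ e2 '' ↑P4 := by
    rintro x ⟨⟨k, i, hk, hi, rfl⟩, hout⟩
    have hi0 : i = 0 := by
      by_contra h0
      apply hout
      refine ⟨k, i - 1, hk, by omega, ?_⟩
      have h1 : bse N k (i - 1) * bsb N = bse N k i := by
        rw [bse_mul_b, Nat.sub_add_cancel (by omega)]
      have h2 : bse N k i * (bsb N)⁻¹ = bse N k (i - 1) := by rw [← h1]; group
      exact h2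
    refine ⟨(k, i), ?_, rfl⟩
    simp only [hP4, Finset.coe_image, Set.mem_image, Finset.mem_coe, Finset.mem_range]
    exact ⟨k, hk, by rw [hi0]⟩
  -- put together
  have hb1 := bside_ncard_le m (bsa N) P1 hs1
  have hb2 := bside_ncard_le m (bsb N) P2 hs2
  have hb3 := bside_ncard_le m (bsa N)⁻¹ P3 hs3
  have hb4 := bside_ncard_le m (bsb N)⁻¹ P4 hs4
  have hsub := boundary_union (N := N) m
  calc bsBoundary N (bsRect N m)
      ≤ (bside m N (bsa N) ∪ bside m N (bsb N) ∪ bside m N (bsa N)⁻¹ ∪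
          bside m N (bsb N)⁻¹).ncard := by
        refine Set.ncard_le_ncard hsub ?_
        have hfin : ∀ s : BSGroup N, (bside m N s).Finite := by
          intro s
          rw [bside_eq_image]
          exact (((bsRect_finite N m).subset (fun x hx => hx.1)).image _)
        exact (((hfin _).union (hfin _)).union (hfin _)).union (hfin _)
    _ ≤ (bside m N (bsa N)).ncard + (bside m N (bsb N)).ncard + (bside m N (bsa N)⁻¹).ncard
        + (bside m N (bsb N)⁻¹).ncard := by
        calc _ ≤ (bside m N (bsa N) ∪ bside m N (bsb N) ∪ bside m N (bsa N)⁻¹).ncard +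
              (bside m N (bsb N)⁻¹).ncard := Set.ncard_union_le _ _
          _ ≤ ((bside m N (bsa N) ∪ bside m N (bsb N)).ncard + (bside m N (bsa N)⁻¹).ncard) +
              (bside m N (bsb N)⁻¹).ncard := by
                gcongr; exact Set.ncard_union_le _ _
          _ ≤ _ := by
                gcongr
                exact Set.ncard_union_le _ _
    _ ≤ N ^ m + N ^ m + N ^ m + N ^ m := by
        gcongr <;> [exact hb1.trans hc1; exact hb2.trans hc2; exact hb3.trans hc3;
          exact hb4.trans hc4]
    _ = 4 * N ^ m := by ring

/-- The edge-isoperimetric constant of the Cayley graph of `BS(1,N)` w.r.t. `{a,b}` is zero;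
indeed the ratios `|E(R_m, Γ∖R_m)|/|R_m|` tend to `0` as `m → ∞`. -/
theorem stmt17 (N : ℕ) (hN : 2 ≤ N) :
    sInf {r : ℝ | ∃ F : Set (BSGroup N), F.Finite ∧ F.Nonempty ∧
        r = (bsBoundary N F : ℝ) / (F.ncard : ℝ)} = 0 ∧
    Filter.Tendsto (fun m : ℕ => (bsBoundary N (bsRect N m) : ℝ) / ((bsRect N m).ncard : ℝ))
      Filter.atTop (nhds 0) := by
  set r : ℕ → ℝ := fun m => (bsBoundary N (bsRect N m) : ℝ) / ((bsRect N m).ncard : ℝ) with hr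
  have hrnonneg : ∀ m, 0 ≤ r m := fun m => by positivity
  have hrle : ∀ m : ℕ, 1 ≤ m → r m ≤ 4 / m := by
    intro m hm
    have hcard : ((bsRect N m).ncard : ℝ) = (N : ℝ) ^ m * m := by
      rw [bsRect_ncard N hN m]; push_cast; ring
    have hpow : (0 : ℝ) < (N : ℝ) ^ m := by positivity
    have hm' : (0 : ℝ) < (m : ℝ) := by exact_mod_cast hm
    have hb : (bsBoundary N (bsRect N m) : ℝ) ≤ 4 * (N : ℝ) ^ m := by
      have := bsBoundary_le hN m
      calc (bsBoundary N (bsRect N m) : ℝ) ≤ ((4 * N ^ m : ℕ) : ℝ) := by exact_mod_cast this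
        _ = 4 * (N : ℝ) ^ m := by push_cast; ring
    rw [hr]
    simp only []
    rw [hcard, div_le_div_iff₀ (by positivity) hm']
    calc (bsBoundary N (bsRect N m) : ℝ) * m ≤ (4 * (N : ℝ) ^ m) * m := by
          apply mul_le_mul_of_nonneg_right hb (le_of_lt hm')
      _ = 4 * ((N : ℝ) ^ m * m) := by ring
  have htend : Filter.Tendsto r Filter.atTop (nhds 0) := by
    apply tendsto_of_tendsto_of_tendsto_of_le_of_le' (g := fun _ => (0 : ℝ))
      (h := fun m : ℕ => (4 : ℝ) / m) tendsto_const_nhds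
      (tendsto_const_div_atTop_nhds_zero_nat 4)
      (Filter.Eventually.of_forall hrnonneg)
      (Filter.eventually_atTop.mpr ⟨1, hrle⟩)
  refine ⟨?_, htend⟩
  set S : Set ℝ := {r : ℝ | ∃ F : Set (BSGroup N), F.Finite ∧ F.Nonempty ∧
      r = (bsBoundary N F : ℝ) / (F.ncard : ℝ)} with hS
  have hbdd : ∀ x ∈ S, (0 : ℝ) ≤ x := by
    rintro x ⟨F, _, _, rfl⟩; positivity
  have hmem : ∀ m : ℕ, 1 ≤ m → r m ∈ S := by
    intro m hm
    refine ⟨bsRect N m, bsRect_finite N m, ?_, rfl⟩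
    refine ⟨bse N 0 0, 0, 0, by positivity, hm, rfl⟩
  have h1 : sInf S ≤ 0 := by
    have hle : ∀ᶠ m in Filter.atTop, sInf S ≤ r m := by
      apply Filter.eventually_atTop.mpr
      exact ⟨1, fun m hm => csInf_le ⟨0, hbdd⟩ (hmem m hm)⟩
    exact ge_of_tendsto htend hle
  have h2 : (0 : ℝ) ≤ sInf S := le_csInf ⟨r 1, hmem 1 le_rfl⟩ hbdd
  linarith
end Main
end
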